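/- arXiv:1203.3444 — 8 statements merged into one kernel-verified Lean document; each statement's English description precedes it below -/
import Mathlib

section
/- Let n be a positive integer and p ∈ [0,1], and let X be a binomial random variable with parameters n and p, with mean μ = np. Then for every real number k with k ≥ 7μ, one has Pr(X ≥ k) ≤ e^{−k}. -/
/-!
Chernoff's bound with the exponent `t = 2`: the moment generating function of `Bin(n, p)` is
`(1 + p (eᵗ - 1))ⁿ ≤ exp (n p (eᵗ - 1))`, so `Pr(X ≥ k) ≤ exp (-2k + (e² - 1) n p)`, and
`e² - 1 < 7` turns `k ≥ 7 n p` into `(e² - 1) n p ≤ k`.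
-/

set_option linter.deprecated false

open Real MeasureTheory ProbabilityTheory NNReal

namespace PMF

variable {p : ℝ≥0} (h : p ≤ 1) (n : ℕ)

theorem binomial_apply_toReal (i : Fin (n + 1)) :
    (binomial p h n i).toReal = (p : ℝ) ^ (i : ℕ) * (1 - p) ^ (n - (i : ℕ)) * n.choose i := by
  rw [binomial_apply, Fin.val_last, ← ENNReal.coe_one, ← ENNReal.coe_sub]
  simp only [ENNReal.toReal_mul, ENNReal.toReal_pow, ENNReal.coe_toReal, ENNReal.toReal_natCast,
    NNReal.coe_sub h, NNReal.coe_one]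

theorem mgf_binomial (t : ℝ) :
    mgf (fun i : Fin (n + 1) => (i : ℝ)) (binomial p h n).toMeasure t
      = ((p : ℝ) * exp t + (1 - p)) ^ n := by
  rw [mgf, integral_eq_sum, add_pow, ← Fin.sum_univ_eq_sum_range]
  refine Finset.sum_congr rfl fun i _ => ?_
  rw [binomial_apply_toReal, smul_eq_mul, mul_pow, ← exp_nat_mul, mul_comm t]
  ring

theorem binomial_measureReal_ge_le_exp {t : ℝ} (ht : 0 ≤ t) (k : ℝ) :
    (binomial p h n).toMeasure.real {i | k ≤ (i : ℝ)} ≤ exp (-t * k + n * p * (exp t - 1)) := by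
  calc (binomial p h n).toMeasure.real {i | k ≤ (i : ℝ)}
      ≤ exp (-t * k) * ((p : ℝ) * exp t + (1 - p)) ^ n := by
        rw [← mgf_binomial]
        exact measure_ge_le_exp_mul_mgf k ht .of_finite
    _ ≤ exp (-t * k) * exp (p * (exp t - 1)) ^ n := by
        gcongr
        · exact add_nonneg (by positivity) (sub_nonneg.mpr h)
        · linarith [add_one_le_exp (p * (exp t - 1))]
    _ = exp (-t * k + n * p * (exp t - 1)) := by
        rw [← exp_nat_mul, ← exp_add]; ring_nf

end PMF

theorem Real.exp_two_lt_eight : exp 2 < 8 := by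
  have : exp 2 = exp 1 ^ 2 := by rw [← exp_nat_mul]; norm_num
  rw [this]; nlinarith [exp_one_lt_d9, exp_pos 1]

theorem binomial_upper_tail_general (n : ℕ) (p : ENNReal) (hp : p ≤ 1)
    (k : ℝ) (hk : 7 * (n * p.toReal) ≤ k) :
    (((PMF.binomial p.toNNReal ((ENNReal.toNNReal_mono ENNReal.one_ne_top hp).trans_eq ENNReal.toNNReal_one) n).toMeasure {i : Fin (n + 1) | k ≤ (i : ℝ)}).toReal
      ≤ Real.exp (-k)) := by
  refine (PMF.binomial_measureReal_ge_le_exp _ n zero_le_two k).trans (exp_le_exp.mpr ?_)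
  have hnp : 0 ≤ (n : ℝ) * p.toReal := by positivity
  rw [ENNReal.coe_toNNReal_eq_toReal]
  nlinarith [exp_two_lt_eight]

/-- If `X ~ Bin(n, p)` with mean `μ = n·p`, then for every real `k ≥ 7μ`,
`Pr(X ≥ k) ≤ e^(−k)`. -/
theorem binomial_upper_tail (n : ℕ) (hn : 0 < n) (p : ENNReal) (hp : p ≤ 1)
    (k : ℝ) (hk : 7 * (n * p.toReal) ≤ k) :
    (((PMF.binomial p.toNNReal ((ENNReal.toNNReal_mono ENNReal.one_ne_top hp).trans_eq ENNReal.toNNReal_one) n).toMeasure {i : Fin (n + 1) | k ≤ (i : ℝ)}).toReal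
      ≤ Real.exp (-k)) :=
  binomial_upper_tail_general n p hp k hk
end

section
/- Let k ≥ 2 and n ≥ 3(k−1) be integers with (k−1) dividing n, and set m = n/(k−1). Let G be a graph whose vertex set is a disjoint union V = V(C₁) ∪ … ∪ V(C_{k−1}) of the vertex sets of k−1 pairwise vertex-disjoint cycles C₁, …, C_{k−1}, each of length m, and whose edge set is the union of the edge sets of C₁, …, C_{k−1} together with, for every 1 ≤ i < j ≤ k−1, a perfect matching P_{ij} in the complete bipartite graph between V(C_i) and V(C_j). Then G is k-regular and k-vertex-connected. -/
/-!
Every vertex `(i, x)` has the two cycle neighbours `(i, x ± 1)`, distinct because `m ≥ 3`, and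
exactly one matching neighbour on each of the other `k - 2` cycles, so `G` is `k`-regular.

Remove a set `S` of at most `k - 1` vertices. If some cycle avoids `S`, it stays connected and
every surviving vertex has a neighbour on it. Otherwise, by pigeonhole, `S` meets each of the
`k - 1` cycles in exactly one vertex, so every cycle survives as a path; any two of these paths are
joined by one of the `m ≥ 3` edges of their matching, at most two of which touch `S`.
-/

/-- A graph `G` (on at least `k+1` vertices) is `k`-vertex-connected if the removal of
any set of fewer than `k` vertices leaves a connected graph. -/
def IsKVertexConnected {V : Type*} (k : ℕ) (G : SimpleGraph V) : Prop :=
  k + 1 ≤ Nat.card V ∧ ∀ S : Set V, S.ncard < k → (G.induce Sᶜ).Connected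

open Set

namespace ZMod

variable {m : ℕ} [NeZero m]

theorem image_add_natCast_Iio (a : ZMod m) : (fun t : ℕ => a + t) '' Iio m = univ :=
  eq_univ_of_forall fun x => ⟨(x - a).val, val_lt _, by simp⟩

theorem image_add_one_add_natCast_Iio_pred (a : ZMod m) :
    (fun t : ℕ => a + 1 + t) '' Iio (m - 1) = {a}ᶜ := by
  ext x
  simp only [mem_image, mem_Iio, mem_compl_singleton_iff]
  constructor
  · rintro ⟨t, ht, rfl⟩ h
    have : ((t + 1 : ℕ) : ZMod m) = 0 := by push_cast; linear_combination h
    rw [natCast_eq_zero_iff] at this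
    exact absurd (Nat.le_of_dvd t.succ_pos this) (by omega)
  · intro hx
    refine ⟨(x - a - 1).val, ?_, by simp⟩
    have hlt := val_lt (x - a - 1)
    refine lt_of_le_of_ne (by omega) fun h => hx ?_
    have : x - a - 1 = ((m - 1 : ℕ) : ZMod m) := by rw [← h, natCast_zmod_val]
    rw [Nat.cast_pred (NeZero.pos m), natCast_self] at this
    linear_combination this

end ZMod

namespace SimpleGraph

variable {V : Type*} {G : SimpleGraph V}

theorem preconnected_induce_image_Iio {f : ℕ → V} {N : ℕ}
    (hf : ∀ t, t + 1 < N → G.Adj (f t) (f (t + 1))) : (G.induce (f '' Iio N)).Preconnected := by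
  let φ : pathGraph N →g G.induce (f '' Iio N) :=
    { toFun := fun t => ⟨f t, t, t.2, rfl⟩
      map_rel' := by
        intro u v huv
        rcases pathGraph_adj.mp huv with h | h
        · simpa [← h] using hf u (h ▸ v.2)
        · simpa [← h] using (hf v (h ▸ u.2)).symm }
  refine (pathGraph_preconnected N).map φ ?_
  rintro ⟨_, t, ht, rfl⟩
  exact ⟨⟨t, ht⟩, rfl⟩

theorem preconnected_induce_image_of_compl_subsingleton {m : ℕ} [NeZero m] {g : ZMod m → V}
    (hg : ∀ x, G.Adj (g x) (g (x + 1))) {A : Set (ZMod m)} (hA : Aᶜ.Subsingleton) :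
    (G.induce (g '' A)).Preconnected := by
  have arc (a : ZMod m) (N : ℕ) :
      (G.induce (g '' ((fun t : ℕ => a + t) '' Iio N))).Preconnected := by
    rw [image_image]
    exact preconnected_induce_image_Iio fun t _ => by simpa [add_assoc] using hg (a + t)
  rcases hA.eq_empty_or_singleton with h | ⟨s, h⟩
  · rw [compl_empty_iff.mp h, ← ZMod.image_add_natCast_Iio 0]
    exact arc 0 m
  · rw [← compl_compl A, h, ← ZMod.image_add_one_add_natCast_Iio_pred s]
    exact arc (s + 1) (m - 1)

theorem induce_connected_of_forall_exists_adj {s T : Set V} (hTs : T ⊆ s)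
    (hT : (G.induce T).Connected) (hadj : ∀ v ∈ s, ∃ w ∈ T, G.Adj w v) :
    (G.induce s).Connected := by
  obtain ⟨⟨u, hu⟩⟩ := hT.nonempty
  refine induce_connected_of_patches u (hTs hu) fun {v} hv => ?_
  obtain ⟨w, hw, hwv⟩ := hadj v hv
  refine ⟨T ∪ {v}, union_subset hTs (singleton_subset_iff.mpr hv), .inl hu, .inr rfl, ?_⟩
  exact connected_induce_union hT.preconnected .of_subsingleton hw (mem_singleton v) hwv _ _

theorem induce_iUnion_connected_of_exists_adj {ι : Type*} [Nonempty ι] {R : ι → Set V}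
    (hR : ∀ i, (G.induce (R i)).Connected)
    (hadj : ∀ i j, i ≠ j → ∃ v ∈ R i, ∃ w ∈ R j, G.Adj v w) :
    (G.induce (⋃ i, R i)).Connected := by
  obtain ⟨i₀⟩ := ‹Nonempty ι›
  obtain ⟨⟨u, hu⟩⟩ := (hR i₀).nonempty
  refine induce_connected_of_patches u (subset_iUnion R i₀ hu) fun {v} hv => ?_
  obtain ⟨i, hvi⟩ := mem_iUnion.mp hv
  refine ⟨R i₀ ∪ R i, union_subset (subset_iUnion R i₀) (subset_iUnion R i), .inl hu, .inr hvi, ?_⟩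
  obtain rfl | hi := eq_or_ne i₀ i
  · exact induce_union_connected (hR i₀).preconnected (hR i₀).preconnected ⟨u, hu, hu⟩ _ _
  · obtain ⟨a, ha, b, hb, hab⟩ := hadj i₀ i hi
    exact connected_induce_union (hR i₀).preconnected (hR i).preconnected ha hb hab _ _

end SimpleGraph

theorem Set.injOn_fst_of_ncard_le {α β : Type*} [Finite α] [Finite β] {S : Set (α × β)}
    (hS : S.ncard ≤ Nat.card α) (hfst : ∀ a, ∃ b, (a, b) ∈ S) : S.InjOn Prod.fst :=
  fun _ hv _ hw => Set.inj_on_of_surj_on_of_ncard_le (t := univ) (fun v _ => v.1)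
    (fun _ _ => mem_univ _) (fun a _ => let ⟨b, hb⟩ := hfst a; ⟨(a, b), hb, rfl⟩)
    (by rwa [ncard_univ]) hv hw

theorem Set.exists_notMem_notMem_of_subsingleton {α : Type*} [Finite α] {A B : Set α}
    (hA : A.Subsingleton) (hB : B.Subsingleton) (hα : 2 < Nat.card α) : ∃ x, x ∉ A ∧ x ∉ B := by
  have hAB : (A ∪ B).ncard < (univ : Set α).ncard := by
    grw [ncard_union_le, ncard_le_one_iff_subsingleton.mpr hA,
      ncard_le_one_iff_subsingleton.mpr hB, ncard_univ]
    omega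
  obtain ⟨x, hx⟩ := (ne_univ_iff_exists_notMem _).mp (ne_of_apply_ne ncard hAB.ne)
  exact ⟨x, fun h => hx (.inl h), fun h => hx (.inr h)⟩

section

variable {n m : ℕ}

def SimpleGraph.IsCyclesPlusMatchings (G : SimpleGraph (Fin n × ZMod m))
    (π : Fin n → Fin n → ZMod m ≃ ZMod m) : Prop :=
  ∀ i x j y, G.Adj (i, x) (j, y) ↔
    ((i = j ∧ (y = x + 1 ∨ x = y + 1)) ∨ (i < j ∧ y = π i j x) ∨ (j < i ∧ x = π j i y))

def matchingEquiv (π : Fin n → Fin n → ZMod m ≃ ZMod m) (i j : Fin n) : ZMod m ≃ ZMod m :=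
  if i < j then π i j else (π j i).symm

namespace SimpleGraph.IsCyclesPlusMatchings

variable {π : Fin n → Fin n → ZMod m ≃ ZMod m} {G : SimpleGraph (Fin n × ZMod m)}

theorem adj_add_one (hG : G.IsCyclesPlusMatchings π) (i : Fin n) (x : ZMod m) :
    G.Adj (i, x) (i, x + 1) :=
  (hG _ _ _ _).mpr (.inl ⟨rfl, .inl rfl⟩)

theorem adj_iff_of_ne (hG : G.IsCyclesPlusMatchings π) {i j : Fin n} (hij : i ≠ j)
    (x y : ZMod m) : G.Adj (i, x) (j, y) ↔ y = matchingEquiv π i j x := by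
  rw [hG, matchingEquiv]
  rcases hij.lt_or_gt with h | h
  · simp [h, h.ne, h.not_gt]
  · simp [h.ne', h.not_gt, h, Equiv.eq_symm_apply, eq_comm]

theorem adj_matchingEquiv (hG : G.IsCyclesPlusMatchings π) {i j : Fin n} (hij : i ≠ j)
    (x : ZMod m) : G.Adj (i, x) (j, matchingEquiv π i j x) :=
  (hG.adj_iff_of_ne hij x _).mpr rfl

theorem neighborFinset_eq [NeZero m] [DecidableRel G.Adj] (hG : G.IsCyclesPlusMatchings π)
    (i : Fin n) (x : ZMod m) :
    G.neighborFinset (i, x) = insert (i, x + 1) (insert (i, x - 1)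
      ((Finset.univ.erase i).image fun j => (j, matchingEquiv π i j x))) := by
  ext ⟨j, y⟩
  obtain rfl | hij := eq_or_ne i j
  · simp [hG i x i y, eq_sub_iff_add_eq, eq_comm (a := x)]
  · simp [hG.adj_iff_of_ne hij, hij.symm, eq_comm (a := y)]

theorem isRegularOfDegree [NeZero m] [DecidableRel G.Adj] (hG : G.IsCyclesPlusMatchings π)
    (hm : 3 ≤ m) : G.IsRegularOfDegree (n + 1) := by
  have h2 : (2 : ZMod m) ≠ 0 := by
    rw [← Nat.cast_two, Ne, ZMod.natCast_eq_zero_iff]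
    exact fun h => absurd (Nat.le_of_dvd two_pos h) (by omega)
  rintro ⟨i, x⟩
  rw [← card_neighborFinset_eq_degree, hG.neighborFinset_eq, Finset.card_insert_of_notMem,
    Finset.card_insert_of_notMem,
    Finset.card_image_of_injective _ fun _ _ h => congrArg Prod.fst h,
    Finset.card_erase_of_mem (Finset.mem_univ i), Finset.card_univ, Fintype.card_fin]
  · have := i.pos; omega
  · simp
  · simp only [Finset.mem_insert, Prod.mk.injEq, true_and, Finset.mem_image, not_or]
    refine ⟨fun h => h2 (by linear_combination h), by simp⟩

theorem connected_induce_compl_of_row_disjoint [NeZero m] (hG : G.IsCyclesPlusMatchings π)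
    {S : Set (Fin n × ZMod m)} {j : Fin n} (hj : ∀ x, (j, x) ∉ S) : (G.induce Sᶜ).Connected := by
  refine induce_connected_of_forall_exists_adj (T := (j, ·) '' univ) ?_ ?_ ?_
  · rintro _ ⟨x, -, rfl⟩
    exact hj x
  · exact (connected_iff _).mpr
      ⟨preconnected_induce_image_of_compl_subsingleton (hG.adj_add_one j) (by simp),
        ⟨⟨_, 0, trivial, rfl⟩⟩⟩
  · rintro ⟨i, x⟩ -
    obtain rfl | hji := eq_or_ne j i
    · exact ⟨(j, x - 1), ⟨_, trivial, rfl⟩, by simpa using hG.adj_add_one j (x - 1)⟩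
    · exact ⟨_, ⟨_, trivial, rfl⟩, (hG.adj_matchingEquiv hji.symm x).symm⟩

theorem connected_induce_compl_of_injOn [NeZero m] [NeZero n] (hG : G.IsCyclesPlusMatchings π)
    (hm : 3 ≤ m) {S : Set (Fin n × ZMod m)} (hS : S.InjOn Prod.fst) : (G.induce Sᶜ).Connected := by
  have hrow (i : Fin n) : {x | (i, x) ∈ S}.Subsingleton := fun x hx y hy => by
    simpa using hS hx hy rfl
  have hfree (i j : Fin n) : ∃ x, (i, x) ∉ S ∧ (j, matchingEquiv π i j x) ∉ S :=
    exists_notMem_notMem_of_subsingleton (hrow i) ((hrow j).preimage (Equiv.injective _))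
      (by rw [Nat.card_zmod]; omega)
  have hSc : Sᶜ = ⋃ i, (i, ·) '' {x | (i, x) ∉ S} := by
    ext ⟨i, x⟩
    simp
  rw [hSc]
  refine induce_iUnion_connected_of_exists_adj (fun i => (connected_iff _).mpr ⟨?_, ?_⟩) ?_
  · exact preconnected_induce_image_of_compl_subsingleton (hG.adj_add_one i)
      (by simpa [compl_ofPred] using hrow i)
  · obtain ⟨x, hx, -⟩ := hfree i i
    exact ⟨⟨_, x, hx, rfl⟩⟩
  · intro i j hij
    obtain ⟨x, hx, hy⟩ := hfree i j
    exact ⟨_, ⟨x, hx, rfl⟩, _, ⟨_, hy, rfl⟩, hG.adj_matchingEquiv hij x⟩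

theorem connected_induce_compl [NeZero m] [NeZero n] (hG : G.IsCyclesPlusMatchings π)
    (hm : 3 ≤ m) {S : Set (Fin n × ZMod m)} (hS : S.ncard ≤ n) : (G.induce Sᶜ).Connected := by
  by_cases h : ∃ j, ∀ x, (j, x) ∉ S
  · obtain ⟨j, hj⟩ := h
    exact hG.connected_induce_compl_of_row_disjoint hj
  · push Not at h
    exact hG.connected_induce_compl_of_injOn hm (injOn_fst_of_ncard_le (by simpa using hS) h)

end SimpleGraph.IsCyclesPlusMatchings

end

/-- Let `k ≥ 2`, `m ≥ 3` (i.e. `n = (k-1)·m ≥ 3(k-1)` with `(k-1) ∣ n`).  Take `k-1`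
pairwise vertex-disjoint cycles, each of length `m`, with vertex sets
`{i} × ZMod m` (the cycle edges joining `(i, x)` to `(i, x+1)`), and for every pair
`i < j` a perfect matching between the `i`-th and the `j`-th cycle, given by a
bijection `π i j` (so `(i, x)` is matched to `(j, π i j x)`).  Then the resulting
graph is `k`-regular and `k`-vertex-connected. -/
theorem regular_and_kConnected_of_cycles_plus_matchings
    (k m : ℕ) (hk : 2 ≤ k) (hm : 3 ≤ m) [NeZero m]
    (π : Fin (k - 1) → Fin (k - 1) → (ZMod m ≃ ZMod m))
    (G : SimpleGraph (Fin (k - 1) × ZMod m)) [DecidableRel G.Adj]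
    (hAdj : ∀ i x j y, G.Adj (i, x) (j, y) ↔
      ((i = j ∧ (y = x + 1 ∨ x = y + 1)) ∨
        (i < j ∧ y = π i j x) ∨ (j < i ∧ x = π j i y))) :
    G.IsRegularOfDegree k ∧ IsKVertexConnected k G := by
  have hG : G.IsCyclesPlusMatchings π := hAdj
  have : NeZero (k - 1) := ⟨by omega⟩
  have hk' : k - 1 + 1 = k := by omega
  refine ⟨by simpa only [hk'] using hG.isRegularOfDegree hm, ?_,
    fun S hS => hG.connected_induce_compl hm (by omega)⟩
  rw [Nat.card_prod, Nat.card_eq_fintype_card, Fintype.card_fin, Nat.card_zmod]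
  nlinarith
end

section
/- Let G = (U₁ ∪ U₂, E) be a bipartite graph with parts U₁ and U₂ of equal size |U₁| = |U₂| = n, and let r ≤ n/2 be a positive integer such that: (B1) for each i ∈ {1,2} and every X ⊆ U_i with |X| ≤ r, the neighborhood satisfies |N(X)| ≥ |X|; and (B2) for every X ⊆ U₁ and Y ⊆ U₂ with |X| = |Y| = r there is at least one edge between X and Y. Then G has a perfect matching. -/
/-!
Hall's condition on `U₁` follows from (B1) for small sets. For `X ⊆ U₁` with `|X| > r`, the set
`Y = U₂ \ N(X)` has no edge to `X`, so (B2) forces `|Y| < r`; then (B1) applied to `Y` gives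
`|Y| ≤ |N(Y)| ≤ |U₁ \ X| = n - |X|`, i.e. `|X| ≤ n - |Y| = |N(X)|`. By symmetry Hall's condition
also holds on `U₂`, hence on every vertex set, and Hall's marriage theorem yields a perfect
matching.
-/

/-- `G.nbhd X` is the set of vertices having at least one neighbor in `X`. -/
def SimpleGraph.nbhd {V : Type*} (G : SimpleGraph V) (X : Set V) : Set V :=
  {v | ∃ x ∈ X, G.Adj x v}

namespace SimpleGraph

variable {V : Type*} {G : SimpleGraph V} {p₁ p₂ : Set V}

lemma nbhd_eq_biUnion_neighborSet (X : Set V) : G.nbhd X = ⋃ x ∈ X, G.neighborSet x := by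
  ext v
  simp [nbhd]

lemma nbhd_mono {X X' : Set V} (h : X ⊆ X') : G.nbhd X ⊆ G.nbhd X' :=
  fun _ ⟨x, hx, hxv⟩ ↦ ⟨x, h hx, hxv⟩

lemma IsBipartiteWith.nbhd_subset (h : G.IsBipartiteWith p₁ p₂) {X : Set V} (hX : X ⊆ p₁) :
    G.nbhd X ⊆ p₂ :=
  fun _ ⟨_, hx, hxv⟩ ↦ h.mem_of_mem_adj (hX hx) hxv

variable [Finite V]

lemma IsBipartiteWith.ncard_le_ncard_nbhd_of_expansion (h : G.IsBipartiteWith p₁ p₂)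
    (hcard : p₁.ncard = p₂.ncard) {r : ℕ}
    (hB1 : ∀ Y ⊆ p₂, Y.ncard ≤ r → Y.ncard ≤ (G.nbhd Y).ncard)
    (hB2 : ∀ X ⊆ p₁, ∀ Y ⊆ p₂, X.ncard = r → Y.ncard = r → ∃ x ∈ X, ∃ y ∈ Y, G.Adj x y)
    {X : Set V} (hX : X ⊆ p₁) (hXr : r ≤ X.ncard) :
    X.ncard ≤ (G.nbhd X).ncard := by
  set Y := p₂ \ G.nbhd X with hY
  have hYp₂ : Y ⊆ p₂ := Set.sdiff_subset
  have hYr : Y.ncard < r := by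
    by_contra! hYr
    obtain ⟨X', hX'X, hX'r⟩ := Set.exists_subset_card_eq hXr
    obtain ⟨Y', hY'Y, hY'r⟩ := Set.exists_subset_card_eq hYr
    obtain ⟨x, hx, y, hy, hxy⟩ :=
      hB2 X' (hX'X.trans hX) Y' (hY'Y.trans hYp₂) hX'r hY'r
    exact (hY'Y hy).2 ⟨x, hX'X hx, hxy⟩
  have hNY : G.nbhd Y ⊆ p₁ \ X := by
    rintro v ⟨y, hy, hyv⟩
    exact ⟨h.symm.mem_of_mem_adj (hYp₂ hy) hyv, fun hv ↦ hy.2 ⟨v, hv, hyv.symm⟩⟩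
  have hNX : G.nbhd X = p₂ \ Y := by
    rw [hY, Set.sdiff_sdiff_cancel_left (h.nbhd_subset hX)]
  have hXp₁ : X.ncard ≤ p₁.ncard := Set.ncard_le_ncard hX
  calc X.ncard
      ≤ p₂.ncard - (p₁ \ X).ncard := by rw [Set.ncard_sdiff hX]; omega
    _ ≤ p₂.ncard - (G.nbhd Y).ncard := Nat.sub_le_sub_left (Set.ncard_le_ncard hNY) _
    _ ≤ p₂.ncard - Y.ncard := Nat.sub_le_sub_left (hB1 Y hYp₂ hYr.le) _
    _ = (G.nbhd X).ncard := by rw [hNX, Set.ncard_sdiff hYp₂]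

lemma IsBipartiteWith.ncard_le_ncard_nbhd_of_forall_subset (h : G.IsBipartiteWith p₁ p₂)
    (hcover : p₁ ∪ p₂ = Set.univ)
    (hall₁ : ∀ X ⊆ p₁, X.ncard ≤ (G.nbhd X).ncard)
    (hall₂ : ∀ X ⊆ p₂, X.ncard ≤ (G.nbhd X).ncard) (s : Set V) :
    s.ncard ≤ (G.nbhd s).ncard := by
  have hsplit : s = s ∩ p₁ ∪ s ∩ p₂ := by
    rw [← Set.inter_union_distrib_left, hcover, Set.inter_univ]
  have hdisj : Disjoint (G.nbhd (s ∩ p₁)) (G.nbhd (s ∩ p₂)) :=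
    h.disjoint.symm.mono (h.nbhd_subset Set.inter_subset_right)
      (h.symm.nbhd_subset Set.inter_subset_right)
  calc s.ncard
      ≤ (s ∩ p₁).ncard + (s ∩ p₂).ncard := by
        conv_lhs => rw [hsplit]
        exact Set.ncard_union_le _ _
    _ ≤ (G.nbhd (s ∩ p₁)).ncard + (G.nbhd (s ∩ p₂)).ncard :=
        add_le_add (hall₁ _ Set.inter_subset_right) (hall₂ _ Set.inter_subset_right)
    _ = (G.nbhd (s ∩ p₁) ∪ G.nbhd (s ∩ p₂)).ncard := (Set.ncard_union_eq hdisj).symm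
    _ ≤ (G.nbhd s).ncard :=
        Set.ncard_le_ncard (Set.union_subset (nbhd_mono Set.inter_subset_left)
          (nbhd_mono Set.inter_subset_left))

end SimpleGraph

theorem perfect_matching_of_expansion_general {V : Type*} [Fintype V] (G : SimpleGraph V)
    (U₁ U₂ : Set V) (hdisj : Disjoint U₁ U₂) (hcover : U₁ ∪ U₂ = Set.univ)
    (n : ℕ) (hU₁ : U₁.ncard = n) (hU₂ : U₂.ncard = n)
    (hbip : ∀ u v, G.Adj u v → (u ∈ U₁ ∧ v ∈ U₂) ∨ (u ∈ U₂ ∧ v ∈ U₁))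
    (r : ℕ)
    (hB1 : ∀ X : Set V, (X ⊆ U₁ ∨ X ⊆ U₂) → X.ncard ≤ r →
      X.ncard ≤ (G.nbhd X).ncard)
    (hB2 : ∀ X Y : Set V, X ⊆ U₁ → Y ⊆ U₂ → X.ncard = r → Y.ncard = r →
      ∃ x ∈ X, ∃ y ∈ Y, G.Adj x y) :
    ∃ M : G.Subgraph, M.IsPerfectMatching := by
  classical
  have hG : G.IsBipartiteWith U₁ U₂ := ⟨hdisj, hbip⟩
  have hall₁ (X : Set V) (hX : X ⊆ U₁) : X.ncard ≤ (G.nbhd X).ncard := by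
    rcases le_total X.ncard r with hXr | hXr
    · exact hB1 X (.inl hX) hXr
    · exact hG.ncard_le_ncard_nbhd_of_expansion (hU₁.trans hU₂.symm)
        (fun Y hY ↦ hB1 Y (.inr hY)) (fun X hX Y hY ↦ hB2 X Y hX hY) hX hXr
  have hall₂ (Y : Set V) (hY : Y ⊆ U₂) : Y.ncard ≤ (G.nbhd Y).ncard := by
    rcases le_total Y.ncard r with hYr | hYr
    · exact hB1 Y (.inr hY) hYr
    · refine hG.symm.ncard_le_ncard_nbhd_of_expansion (hU₂.trans hU₁.symm)
        (fun X hX ↦ hB1 X (.inl hX)) (fun Y hY X hX hYr hXr ↦ ?_) hY hYr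
      obtain ⟨x, hx, y, hy, hxy⟩ := hB2 X Y hX hY hXr hYr
      exact ⟨y, hy, x, hx, hxy.symm⟩
  refine SimpleGraph.exists_isPerfectMatching_of_forall_ncard_le hG fun s ↦ ?_
  rw [← SimpleGraph.nbhd_eq_biUnion_neighborSet]
  exact hG.ncard_le_ncard_nbhd_of_forall_subset hcover hall₁ hall₂ s

/-- Let `G` be a bipartite graph with parts `U₁`, `U₂` of equal size `n`, and let
`1 ≤ r ≤ n/2` be such that (B1) for `i ∈ {1,2}`, every `X ⊆ Uᵢ` with `|X| ≤ r`
satisfies `|N(X)| ≥ |X|`, and (B2) any `X ⊆ U₁`, `Y ⊆ U₂` with `|X| = |Y| = r`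
span at least one edge.  Then `G` has a perfect matching. -/
theorem perfect_matching_of_expansion {V : Type*} [Fintype V] (G : SimpleGraph V)
    (U₁ U₂ : Set V) (hdisj : Disjoint U₁ U₂) (hcover : U₁ ∪ U₂ = Set.univ)
    (n : ℕ) (hU₁ : U₁.ncard = n) (hU₂ : U₂.ncard = n)
    (hbip : ∀ u v, G.Adj u v → (u ∈ U₁ ∧ v ∈ U₂) ∨ (u ∈ U₂ ∧ v ∈ U₁))
    (r : ℕ) (hr0 : 1 ≤ r) (hr : r ≤ n / 2)
    (hB1 : ∀ X : Set V, (X ⊆ U₁ ∨ X ⊆ U₂) → X.ncard ≤ r →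
      X.ncard ≤ (G.nbhd X).ncard)
    (hB2 : ∀ X Y : Set V, X ⊆ U₁ → Y ⊆ U₂ → X.ncard = r → Y.ncard = r →
      ∃ x ∈ X, ∃ y ∈ Y, G.Adj x y) :
    ∃ M : G.Subgraph, M.IsPerfectMatching :=
  perfect_matching_of_expansion_general G U₁ U₂ hdisj hcover n hU₁ hU₂ hbip r hB1 hB2
end

section
/- Let K ≥ 2 and 1 ≤ α < K be real numbers, let p = p(n) = (ln n)^K / n, and let f = f(n) be a function satisfying 1 ≤ f(n) and f(n) = O((ln ln n)³). Then there is a constant c > 0 such that a.a.s. the random graph G ~ G(n,p) satisfies: for every two disjoint vertex subsets U, W with |U| = |W| = ⌊n·f(n)^{−1}·(ln n)^{−α}⌋, the number of edges with one endpoint in U and one endpoint in W is at least c·n·f(n)^{−2}·(ln n)^{K−2α}. -/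
/-- The set `E(U,W)` of edges of `G` with one endpoint in `U` and one endpoint in `W`. -/
def SimpleGraph.edgesBetween {V : Type*} (G : SimpleGraph V) (U W : Set V) :
    Set (Sym2 V) :=
  {e | e ∈ G.edgeSet ∧ ∃ u ∈ U, ∃ w ∈ W, e = s(u, w)}

open Classical in
/-- The probability, under the binomial random graph `G(n,p)`, of the event
`A ⊆ SimpleGraph (Fin n)`. -/
noncomputable def gnpProb (n : ℕ) (p : ℝ) (A : Set (SimpleGraph (Fin n))) : ℝ :=
  ∑ G ∈ Finset.univ.filter (· ∈ A),
    p ^ G.edgeSet.ncard * (1 - p) ^ (n.choose 2 - G.edgeSet.ncard)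

/-- A sequence of events holds asymptotically almost surely in `G(n, p(n))` if its
probability tends to `1` as `n → ∞`. -/
def GnpAAS (p : ℕ → ℝ) (A : ∀ n : ℕ, Set (SimpleGraph (Fin n))) : Prop :=
  Filter.Tendsto (fun n => gnpProb n (p n) (A n)) Filter.atTop (nhds 1)

/-! For fixed disjoint `U`, `W` of size `m`, `|E(U,W)|` is a sum of `m²` independent edge
indicators, so the exponential Markov inequality gives
`P(|E(U,W)| < t) ≤ eᵗ (1 - p + p/e)^{m²} ≤ exp (t - p m² / 2)`. Take `x = n f⁻¹ (ln n)^{-α}`,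
`m = ⌊x⌋` and `t = p x² / 32 ≤ p m² / 8`. A union bound over the at most
`(n choose m)² ≤ exp (2 m (ln (n/m) + 1))` pairs bounds the failure probability by `e^{-m}` as soon
as `2 ln (2n/x) + 3 ≤ (3/16) p x`. Here `p x = f⁻¹ (ln n)^{K-α}`, while
`f · ln (2n/x) = f · ln (2 f (ln n)^α) = O((ln ln n)⁴)`, so this holds for large `n` since `α < K`;
and `m ≥ √n / 2 → ∞`. -/

open Finset Real Filter Asymptotics Topology

noncomputable def gnpWeight (n : ℕ) (p : ℝ) (G : SimpleGraph (Fin n)) : ℝ :=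
  p ^ G.edgeSet.ncard * (1 - p) ^ (n.choose 2 - G.edgeSet.ncard)

theorem gnpWeight_nonneg {n : ℕ} {p : ℝ} (hp₀ : 0 ≤ p) (hp₁ : p ≤ 1) (G : SimpleGraph (Fin n)) :
    0 ≤ gnpWeight n p G := by
  have : 0 ≤ 1 - p := sub_nonneg.2 hp₁
  unfold gnpWeight
  positivity

theorem gnpProb_eq_sum_gnpWeight_mul_indicator (n : ℕ) (p : ℝ) (A : Set (SimpleGraph (Fin n))) :
    gnpProb n p A = ∑ G, gnpWeight n p G * A.indicator 1 G := by
  classical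
  rw [gnpProb, Finset.sum_filter]
  refine Finset.sum_congr rfl fun G _ => ?_
  by_cases hG : G ∈ A <;> simp [hG, gnpWeight]

open Classical in
theorem sum_gnpWeight_mul_prod_edgeFinset (n : ℕ) (p : ℝ) (φ : Sym2 (Fin n) → ℝ) :
    ∑ G : SimpleGraph (Fin n), gnpWeight n p G * ∏ e ∈ G.edgeFinset, φ e =
      ∏ e ∈ (⊤ : SimpleGraph (Fin n)).edgeFinset, (p * φ e + (1 - p)) := by
  set D := (⊤ : SimpleGraph (Fin n)).edgeFinset
  have hD : D.card = n.choose 2 := by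
    convert SimpleGraph.card_edgeFinset_top_eq_card_choose_two (V := Fin n)
    simp
  rw [Finset.prod_add]
  refine Finset.sum_nbij' (fun G => G.edgeFinset) (fun T => SimpleGraph.fromEdgeSet T)
    ?_ (fun _ _ => Finset.mem_univ _) ?_ ?_ ?_
  · intro G _
    simpa [D] using SimpleGraph.edgeFinset_mono (le_top : G ≤ ⊤)
  · intro G _
    simp
  · intro T hT
    have hT : ∀ e ∈ T, ¬e.IsDiag := fun e he => by
      simpa [D] using Finset.mem_powerset.1 hT he
    ext e
    simp only [SimpleGraph.mem_edgeFinset, SimpleGraph.edgeSet_fromEdgeSet, Set.mem_sdiff,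
      Finset.mem_coe, and_iff_left_iff_imp]
    exact hT e
  · intro G _
    have hGD : G.edgeFinset ⊆ D := by simpa [D] using SimpleGraph.edgeFinset_mono (le_top : G ≤ ⊤)
    rw [gnpWeight, Finset.prod_mul_distrib, Finset.prod_const, Finset.prod_const,
      Finset.card_sdiff_of_subset hGD, hD, ← SimpleGraph.coe_edgeFinset, Set.ncard_coe_finset]
    ring

theorem sum_gnpWeight (n : ℕ) (p : ℝ) : ∑ G : SimpleGraph (Fin n), gnpWeight n p G = 1 := by
  classical
  simpa using sum_gnpWeight_mul_prod_edgeFinset n p 1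

theorem sum_gnpWeight_mul_pow_ncard_inter (n : ℕ) (p a : ℝ) {S : Finset (Sym2 (Fin n))}
    (hS : ∀ e ∈ S, ¬e.IsDiag) :
    ∑ G : SimpleGraph (Fin n), gnpWeight n p G * a ^ (G.edgeSet ∩ S).ncard =
      (p * a + (1 - p)) ^ S.card := by
  classical
  have key := sum_gnpWeight_mul_prod_edgeFinset n p fun e => if e ∈ S then a else 1
  have hSD : S ⊆ (⊤ : SimpleGraph (Fin n)).edgeFinset := fun e he => by simpa using hS e he
  simp only [Finset.prod_ite_mem, Finset.prod_const, mul_ite, mul_one, ite_add, add_sub_cancel,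
    Finset.inter_eq_right.2 hSD] at key
  convert key using 3 with G
  rw [← SimpleGraph.coe_edgeFinset, ← Finset.coe_inter, Set.ncard_coe_finset]

theorem gnpProb_le_sum_gnpWeight_mul {n : ℕ} {p : ℝ} (hp₀ : 0 ≤ p) (hp₁ : p ≤ 1)
    {A : Set (SimpleGraph (Fin n))} {X : SimpleGraph (Fin n) → ℝ} (hX₀ : ∀ G, 0 ≤ X G)
    (hXA : ∀ G ∈ A, 1 ≤ X G) :
    gnpProb n p A ≤ ∑ G, gnpWeight n p G * X G := by
  classical
  rw [gnpProb_eq_sum_gnpWeight_mul_indicator]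
  refine Finset.sum_le_sum fun G _ => mul_le_mul_of_nonneg_left ?_ (gnpWeight_nonneg hp₀ hp₁ G)
  by_cases hG : G ∈ A
  · simpa [hG] using hXA G hG
  · simpa [hG] using hX₀ G

theorem gnpProb_le_sum_gnpProb {n : ℕ} {p : ℝ} (hp₀ : 0 ≤ p) (hp₁ : p ≤ 1) {ι : Type*}
    (I : Finset ι) (B : ι → Set (SimpleGraph (Fin n))) {A : Set (SimpleGraph (Fin n))}
    (hA : ∀ G ∈ A, ∃ i ∈ I, G ∈ B i) :
    gnpProb n p A ≤ ∑ i ∈ I, gnpProb n p (B i) := by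
  have hind : ∀ G i, 0 ≤ (B i).indicator (1 : SimpleGraph (Fin n) → ℝ) G :=
    fun G i => Set.indicator_nonneg (fun _ _ => zero_le_one) G
  calc gnpProb n p A ≤ ∑ G, gnpWeight n p G * ∑ i ∈ I, (B i).indicator 1 G := by
        refine gnpProb_le_sum_gnpWeight_mul hp₀ hp₁ (fun G => Finset.sum_nonneg fun i _ => hind G i)
          fun G hG => ?_
        obtain ⟨i, hi, hGi⟩ := hA G hG
        calc (1 : ℝ) = (B i).indicator 1 G := by simp [hGi]
          _ ≤ ∑ j ∈ I, (B j).indicator 1 G := Finset.single_le_sum (fun j _ => hind G j) hi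
    _ = ∑ i ∈ I, gnpProb n p (B i) := by
        simp only [gnpProb_eq_sum_gnpWeight_mul_indicator, Finset.mul_sum]
        exact Finset.sum_comm

theorem gnpProb_add_gnpProb_compl (n : ℕ) (p : ℝ) (A : Set (SimpleGraph (Fin n))) :
    gnpProb n p A + gnpProb n p Aᶜ = 1 := by
  simp only [gnpProb_eq_sum_gnpWeight_mul_indicator, ← Finset.sum_add_distrib, ← mul_add,
    Set.indicator_self_add_compl_apply, Pi.one_apply, mul_one, sum_gnpWeight]

theorem gnpProb_nonneg {n : ℕ} {p : ℝ} (hp₀ : 0 ≤ p) (hp₁ : p ≤ 1)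
    (A : Set (SimpleGraph (Fin n))) : 0 ≤ gnpProb n p A := by
  rw [gnpProb_eq_sum_gnpWeight_mul_indicator]
  exact Finset.sum_nonneg fun G _ =>
    mul_nonneg (gnpWeight_nonneg hp₀ hp₁ G) (Set.indicator_nonneg (fun _ _ => zero_le_one) G)

namespace SimpleGraph

variable {V : Type*} [DecidableEq V]

theorem edgesBetween_coe_finset (G : SimpleGraph V) (U W : Finset V) :
    G.edgesBetween U W = G.edgeSet ∩ ↑((U ×ˢ W).image fun x => s(x.1, x.2)) := by
  ext e
  simp [edgesBetween, eq_comm, and_assoc]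

end SimpleGraph

theorem Finset.card_image_sym2_product {V : Type*} [DecidableEq V] {U W : Finset V}
    (hUW : Disjoint U W) : ((U ×ˢ W).image fun x => s(x.1, x.2)).card = U.card * W.card := by
  rw [Finset.card_image_of_injOn, Finset.card_product]
  rintro ⟨u, w⟩ huw ⟨u', w'⟩ huw' h
  simp only [Finset.coe_product, Set.mem_prod, Finset.mem_coe] at huw huw'
  rcases Sym2.eq_iff.1 h with ⟨rfl, rfl⟩ | ⟨rfl, rfl⟩
  · rfl
  · exact absurd huw'.2 (Finset.disjoint_left.1 hUW huw.1)

theorem Finset.not_isDiag_of_mem_image_sym2_product {V : Type*} [DecidableEq V] {U W : Finset V}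
    (hUW : Disjoint U W) {e : Sym2 V} (he : e ∈ (U ×ˢ W).image fun x => s(x.1, x.2)) :
    ¬e.IsDiag := by
  obtain ⟨⟨u, w⟩, huw, rfl⟩ := Finset.mem_image.1 he
  rw [Finset.mem_product] at huw
  rintro (rfl : u = w)
  exact Finset.disjoint_left.1 hUW huw.1 huw.2

theorem gnpProb_ncard_edgesBetween_lt_le {n : ℕ} {p : ℝ} (hp₀ : 0 ≤ p) (hp₁ : p ≤ 1)
    {U W : Finset (Fin n)} (hUW : Disjoint U W) (t : ℝ) :
    gnpProb n p {G | ((G.edgesBetween U W).ncard : ℝ) < t} ≤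
      exp t * (p * exp (-1) + (1 - p)) ^ (U.card * W.card) := by
  have hexp : ∀ k : ℕ, exp t * exp (-1) ^ k = exp (t - k) := fun k => by
    rw [← exp_nat_mul, ← exp_add]; ring_nf
  calc gnpProb n p {G | ((G.edgesBetween U W).ncard : ℝ) < t}
      ≤ ∑ G, gnpWeight n p G * (exp t * exp (-1) ^ (G.edgesBetween U W).ncard) := by
        refine gnpProb_le_sum_gnpWeight_mul hp₀ hp₁ (fun G => by positivity) fun G hG => ?_
        rw [hexp, one_le_exp_iff]
        exact (sub_pos.2 hG).le
    _ = exp t * (p * exp (-1) + (1 - p)) ^ (U.card * W.card) := by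
        simp only [SimpleGraph.edgesBetween_coe_finset, mul_left_comm _ (exp t), ← Finset.mul_sum,
          sum_gnpWeight_mul_pow_ncard_inter n p _
            (fun _ => Finset.not_isDiag_of_mem_image_sym2_product hUW),
          Finset.card_image_sym2_product hUW]

theorem gnpProb_exists_sparse_pair_le {n : ℕ} {p : ℝ} (hp₀ : 0 ≤ p) (hp₁ : p ≤ 1) (m : ℕ)
    (t : ℝ) :
    gnpProb n p {G | ∃ U W : Finset (Fin n), Disjoint U W ∧ U.card = m ∧ W.card = m ∧
        ((G.edgesBetween U W).ncard : ℝ) < t} ≤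
      (n.choose m : ℝ) ^ 2 * (exp t * (p * exp (-1) + (1 - p)) ^ (m * m)) := by
  classical
  set I : Finset (Finset (Fin n) × Finset (Fin n)) :=
    (univ.powersetCard m ×ˢ univ.powersetCard m).filter fun UW => Disjoint UW.1 UW.2
  have hmem : ∀ UW ∈ I, UW.1.card = m ∧ UW.2.card = m ∧ Disjoint UW.1 UW.2 := by
    simp +contextual [I]
  have hI : (I.card : ℝ) ≤ (n.choose m : ℝ) ^ 2 := by
    have : I.card ≤ n.choose m * n.choose m := by
      refine (Finset.card_filter_le _ _).trans_eq ?_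
      simp
    exact_mod_cast this.trans_eq (sq _).symm
  calc _ ≤ ∑ UW ∈ I, gnpProb n p {G | ((G.edgesBetween UW.1 UW.2).ncard : ℝ) < t} := by
        refine gnpProb_le_sum_gnpProb hp₀ hp₁ _ _ ?_
        rintro G ⟨U, W, hUW, hU, hW, hG⟩
        exact ⟨(U, W), by simp [I, hUW, hU, hW], hG⟩
    _ ≤ I.card • (exp t * (p * exp (-1) + (1 - p)) ^ (m * m)) := by
        refine Finset.sum_le_card_nsmul _ _ _ fun UW hUW => ?_
        obtain ⟨hU, hW, hUW⟩ := hmem UW hUW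
        simpa [hU, hW] using gnpProb_ncard_edgesBetween_lt_le hp₀ hp₁ hUW t
    _ ≤ _ := by
        rw [nsmul_eq_mul]
        gcongr

theorem Nat.choose_le_exp_mul_log_div_add_one {n m : ℕ} (hn : 0 < n) (hm : 0 < m) :
    (n.choose m : ℝ) ≤ Real.exp (m * (Real.log (n / m) + 1)) := by
  have hnm : (0 : ℝ) < n / m := by positivity
  calc (n.choose m : ℝ) ≤ (n : ℝ) ^ m / m.factorial := Nat.choose_le_pow_div m n
    _ = ((n : ℝ) / m) ^ m * ((m : ℝ) ^ m / m.factorial) := by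
        rw [div_pow]; field_simp
    _ ≤ ((n : ℝ) / m) ^ m * Real.exp m := by
        gcongr; exact Real.pow_div_factorial_le_exp _ (Nat.cast_nonneg m) m
    _ = Real.exp (m * (Real.log (n / m) + 1)) := by
        rw [mul_add, mul_one, Real.exp_add, Real.exp_nat_mul, Real.exp_log hnm]

theorem mul_exp_neg_one_add_one_sub_le_exp {p : ℝ} (hp : 0 ≤ p) :
    p * exp (-1) + (1 - p) ≤ exp (-(p / 2)) := by
  have he : exp (-1) ≤ 1 / 2 := by
    rw [exp_neg, inv_le_comm₀ (exp_pos 1) (by norm_num)]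
    linarith [add_one_le_exp (1 : ℝ)]
  nlinarith [add_one_le_exp (-(p / 2))]

theorem gnpProb_exists_sparse_pair_le_exp_neg {n : ℕ} {p x : ℝ} (hn : 0 < n) (hp₀ : 0 ≤ p)
    (hp₁ : p ≤ 1) (hx₂ : 2 ≤ x) (hx : 2 * log (2 * n / x) + 3 ≤ 3 / 16 * (p * x)) :
    gnpProb n p {G | ∃ U W : Finset (Fin n), Disjoint U W ∧ U.card = ⌊x⌋₊ ∧ W.card = ⌊x⌋₊ ∧
        ((G.edgesBetween U W).ncard : ℝ) < p * x ^ 2 / 32} ≤ exp (-⌊x⌋₊) := by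
  set m := ⌊x⌋₊
  have hxm : x ≤ 2 * m := by linarith [Nat.lt_floor_add_one x]
  have hm : 0 < m := Nat.floor_pos.2 (by linarith)
  have hm' : (0 : ℝ) < m := by exact_mod_cast hm
  have hlog : log (n / m) ≤ log (2 * n / x) :=
    log_le_log (by positivity) (by rw [div_le_div_iff₀ hm' (by linarith)]; nlinarith)
  have hpx : p * x ^ 2 / 32 ≤ p * m ^ 2 / 8 := by
    have : x ^ 2 ≤ 4 * m ^ 2 := by nlinarith
    nlinarith
  have hpm : 3 / 16 * (p * x) * m ≤ 3 / 8 * p * m ^ 2 := by nlinarith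
  refine (gnpProb_exists_sparse_pair_le hp₀ hp₁ m _).trans ?_
  calc (n.choose m : ℝ) ^ 2 * (exp (p * x ^ 2 / 32) * (p * exp (-1) + (1 - p)) ^ (m * m))
      ≤ exp (m * (log (n / m) + 1)) ^ 2 * (exp (p * x ^ 2 / 32) * exp (-(p / 2)) ^ (m * m)) := by
        have : 0 ≤ p * exp (-1) + (1 - p) := by have := exp_pos (-1); nlinarith
        gcongr ?_ ^ 2 * (_ * ?_ ^ _)
        · exact Nat.choose_le_exp_mul_log_div_add_one hn hm
        · exact mul_exp_neg_one_add_one_sub_le_exp hp₀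
    _ = exp (2 * m * (log (n / m) + 1) + p * x ^ 2 / 32 - p * m ^ 2 / 2) := by
        rw [← exp_nat_mul, ← exp_nat_mul, ← exp_add, ← exp_add]
        push_cast
        ring_nf
    _ ≤ exp (-m) := by
        gcongr
        nlinarith

theorem GnpAAS.of_eventually_gnpProb_compl_le {p ε : ℕ → ℝ} {A : ∀ n : ℕ, Set (SimpleGraph (Fin n))}
    (hp : ∀ᶠ n in atTop, p n ∈ Set.Icc 0 1) (hε : Tendsto ε atTop (𝓝 0))
    (hA : ∀ᶠ n in atTop, gnpProb n (p n) (A n)ᶜ ≤ ε n) : GnpAAS p A := by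
  have hlow : Tendsto (fun n => 1 - ε n) atTop (𝓝 1) := by
    simpa using (tendsto_const_nhds (x := (1 : ℝ))).sub hε
  refine tendsto_of_tendsto_of_tendsto_of_le_of_le' hlow tendsto_const_nhds ?_ ?_
  · filter_upwards [hA] with n hn
    linarith [gnpProb_add_gnpProb_compl n (p n) (A n)]
  · filter_upwards [hp] with n hn
    linarith [gnpProb_add_gnpProb_compl n (p n) (A n), gnpProb_nonneg hn.1 hn.2 (A n)ᶜ]

theorem tendsto_log_natCast_atTop : Tendsto (fun n : ℕ => log n) atTop atTop :=
  tendsto_log_atTop.comp tendsto_natCast_atTop_atTop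

theorem isLittleO_log_log_pow_log_rpow (k : ℕ) {s : ℝ} (hs : 0 < s) :
    (fun n : ℕ => log (log n) ^ k) =o[atTop] fun n => log n ^ s := by
  simpa [Function.comp_def] using
    (isLittleO_log_rpow_rpow_atTop (k : ℝ) hs).comp_tendsto tendsto_log_natCast_atTop

theorem eventually_log_rpow_le_rpow (r : ℝ) {s : ℝ} (hs : 0 < s) :
    ∀ᶠ n : ℕ in atTop, log n ^ r ≤ (n : ℝ) ^ s := by
  filter_upwards [((isLittleO_log_rpow_rpow_atTop r hs).comp_tendsto
    tendsto_natCast_atTop_atTop).bound one_pos, eventually_ge_atTop 1] with n h hn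
  have hL : 0 ≤ log n := log_nonneg (by exact_mod_cast hn)
  simpa [abs_of_nonneg (rpow_nonneg hL r), abs_of_nonneg (rpow_nonneg (Nat.cast_nonneg n) s)]
    using h

theorem eventually_log_rpow_div_mem_Icc (K : ℝ) :
    ∀ᶠ n : ℕ in atTop, log n ^ K / n ∈ Set.Icc (0 : ℝ) 1 := by
  filter_upwards [eventually_log_rpow_le_rpow K one_pos, eventually_gt_atTop 0] with n h hn
  have hn : (0 : ℝ) < n := by exact_mod_cast hn
  exact ⟨div_nonneg (rpow_nonneg (log_natCast_nonneg n) K) hn.le,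
    div_le_one_of_le₀ (by simpa using h) hn.le⟩

section

variable {f : ℕ → ℝ}

theorem eventually_le_log (hf : f =O[atTop] fun n => log (log n) ^ 3) :
    ∀ᶠ n : ℕ in atTop, f n ≤ log n := by
  have := (hf.trans_isLittleO (by simpa using isLittleO_log_log_pow_log_rpow 3 one_pos)).bound
    one_pos
  filter_upwards [this, eventually_ge_atTop 1] with n h hn
  have hL : 0 ≤ log n := log_nonneg (by exact_mod_cast hn)
  simp only [Real.norm_eq_abs, one_mul, abs_of_nonneg hL] at h
  exact (le_abs_self _).trans h

theorem eventually_two_mul_log_add_three_le {K α : ℝ} (hα : 0 ≤ α) (hαK : α < K)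
    (hf₁ : ∀ n, 1 ≤ f n) (hf₂ : f =O[atTop] fun n => log (log n) ^ 3) :
    ∀ᶠ n : ℕ in atTop,
      2 * log (2 * f n * log n ^ α) + 3 ≤ 3 / 16 * ((f n)⁻¹ * log n ^ (K - α)) := by
  have hf : ∀ n, 0 < f n := fun n => one_pos.trans_le (hf₁ n)
  have hL : ∀ᶠ n : ℕ in atTop, 1 ≤ log n := tendsto_log_natCast_atTop.eventually_ge_atTop 1
  have hLL : ∀ᶠ n : ℕ in atTop, 1 ≤ log (log n) :=
    (tendsto_log_atTop.comp tendsto_log_natCast_atTop).eventually_ge_atTop 1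
  have hlog : ∀ᶠ n : ℕ in atTop,
      0 ≤ log (2 * f n * log n ^ α) ∧ log (2 * f n * log n ^ α) ≤ 1 + (1 + α) * log (log n) := by
    filter_upwards [eventually_le_log hf₂, hL] with n hfL hL
    have hfn := hf n
    have hLα : 1 ≤ log n ^ α := one_le_rpow hL hα
    refine ⟨log_nonneg (by nlinarith [hf₁ n]), ?_⟩
    rw [log_mul (by positivity) (by positivity), log_mul (by norm_num) hfn.ne',
      log_rpow (by linarith)]
    nlinarith [log_le_log hfn hfL, log_two_lt_d9]
  have hg : (fun n => (2 * log (2 * f n * log n ^ α) + 3) * f n) =O[atTop]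
      fun n => log (log n) * f n := by
    refine IsBigO.of_bound (2 * α + 7) ?_
    filter_upwards [hlog, hLL] with n hlog hLL
    have hfn := hf n
    rw [norm_of_nonneg (by nlinarith), norm_of_nonneg (by positivity)]
    nlinarith
  have hg' := (hg.trans ((isBigO_refl _ _).mul hf₂)).trans_isLittleO
    (by simpa [pow_succ'] using isLittleO_log_log_pow_log_rpow 4 (sub_pos.2 hαK))
  filter_upwards [hg'.bound (by norm_num : (0 : ℝ) < 3 / 16), hlog, hL] with n h hlog hL
  have hfn := hf n
  rw [norm_of_nonneg (by nlinarith), norm_of_nonneg (by positivity)] at h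
  rw [inv_mul_eq_div, mul_div_assoc', le_div_iff₀ hfn]
  exact h

theorem tendsto_natCast_mul_inv_mul_log_rpow_neg_atTop (α : ℝ) (hf₁ : ∀ n, 1 ≤ f n)
    (hf₂ : f =O[atTop] fun n => log (log n) ^ 3) :
    Tendsto (fun n : ℕ => n * (f n)⁻¹ * log n ^ (-α)) atTop atTop := by
  refine tendsto_atTop_mono' _ ?_
    ((tendsto_rpow_atTop one_half_pos).comp tendsto_natCast_atTop_atTop)
  filter_upwards [eventually_le_log hf₂, eventually_log_rpow_le_rpow (α + 1) one_half_pos,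
    tendsto_log_natCast_atTop.eventually_gt_atTop 0, eventually_gt_atTop 0] with n hfL hLn hL hn
  have hf : 0 < f n := one_pos.trans_le (hf₁ n)
  have hn : (0 : ℝ) < n := by exact_mod_cast hn
  have hfL' : f n * log n ^ α ≤ (n : ℝ) ^ (1 / 2 : ℝ) := by
    calc f n * log n ^ α ≤ log n * log n ^ α := by gcongr
      _ = log n ^ (α + 1) := by rw [rpow_add_one hL.ne']; ring
      _ ≤ _ := hLn
  rw [Function.comp_apply, rpow_neg hL.le, mul_assoc, ← mul_inv, ← div_eq_mul_inv,
    le_div_iff₀ (by positivity)]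
  calc (n : ℝ) ^ (1 / 2 : ℝ) * (f n * log n ^ α)
      ≤ (n : ℝ) ^ (1 / 2 : ℝ) * (n : ℝ) ^ (1 / 2 : ℝ) := by gcongr
    _ = n := by rw [← rpow_add hn]; norm_num

theorem eventually_gnpProb_exists_sparse_pair_le {K α : ℝ} (hα : 0 ≤ α) (hαK : α < K)
    (hf₁ : ∀ n, 1 ≤ f n) (hf₂ : f =O[atTop] fun n => log (log n) ^ 3) :
    ∀ᶠ n : ℕ in atTop, gnpProb n (log n ^ K / n) {G | ∃ U W : Finset (Fin n), Disjoint U W ∧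
        U.card = ⌊n * (f n)⁻¹ * log n ^ (-α)⌋₊ ∧ W.card = ⌊n * (f n)⁻¹ * log n ^ (-α)⌋₊ ∧
        ((G.edgesBetween U W).ncard : ℝ) < 1 / 32 * n * (f n)⁻¹ ^ 2 * log n ^ (K - 2 * α)} ≤
      exp (-⌊n * (f n)⁻¹ * log n ^ (-α)⌋₊) := by
  filter_upwards [eventually_log_rpow_div_mem_Icc K,
    (tendsto_natCast_mul_inv_mul_log_rpow_neg_atTop α hf₁ hf₂).eventually_ge_atTop 2,
    eventually_gt_atTop 0, tendsto_log_natCast_atTop.eventually_gt_atTop 0,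
    eventually_two_mul_log_add_three_le hα hαK hf₁ hf₂] with n hp hx hn hL hkey
  set x := (n : ℝ) * (f n)⁻¹ * log n ^ (-α)
  have hf : 0 < f n := one_pos.trans_le (hf₁ n)
  have hn' : (0 : ℝ) < n := by exact_mod_cast hn
  have hpx : log n ^ K / n * x = (f n)⁻¹ * log n ^ (K - α) := by
    simp only [x, rpow_sub hL, rpow_neg hL.le]
    field_simp
  have hpx2 : 1 / 32 * n * (f n)⁻¹ ^ 2 * log n ^ (K - 2 * α) = log n ^ K / n * x ^ 2 / 32 := by
    rw [show K - 2 * α = K + (-α) * (2 : ℕ) by push_cast; ring, rpow_add hL,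
      rpow_mul_natCast hL.le]
    simp only [x]
    field_simp
  have hnx : 2 * n / x = 2 * f n * log n ^ α := by
    simp only [x, rpow_neg hL.le]
    field_simp
  rw [hpx2]
  exact gnpProb_exists_sparse_pair_le_exp_neg hn hp.1 hp.2 hx (by rwa [hnx, hpx])

end

theorem gnp_edgesBetween_lower_bound_general (K α : ℝ) (hα₁ : 1 ≤ α) (hα₂ : α < K)
    (f : ℕ → ℝ) (hf₁ : ∀ n, 1 ≤ f n)
    (hf₂ : f =O[Filter.atTop] fun n => (Real.log (Real.log n)) ^ 3) :
    ∃ c : ℝ, 0 < c ∧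
      GnpAAS (fun n => (Real.log n) ^ K / n)
        (fun n => {G | ∀ U W : Finset (Fin n), Disjoint U W →
          U.card = ⌊(n : ℝ) * (f n)⁻¹ * (Real.log n) ^ (-α)⌋₊ →
          W.card = ⌊(n : ℝ) * (f n)⁻¹ * (Real.log n) ^ (-α)⌋₊ →
          c * n * (f n)⁻¹ ^ 2 * (Real.log n) ^ (K - 2 * α) ≤
            ((G.edgesBetween ↑U ↑W).ncard : ℝ)}) := by
  have hm : Tendsto (fun n : ℕ => exp (-⌊n * (f n)⁻¹ * log n ^ (-α)⌋₊)) atTop (𝓝 0) :=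
    tendsto_exp_atBot.comp <| tendsto_neg_atTop_atBot.comp <| tendsto_natCast_atTop_atTop.comp <|
      tendsto_nat_floor_atTop.comp <| tendsto_natCast_mul_inv_mul_log_rpow_neg_atTop α hf₁ hf₂
  refine ⟨1 / 32, by norm_num, GnpAAS.of_eventually_gnpProb_compl_le
    (eventually_log_rpow_div_mem_Icc K) hm ?_⟩
  filter_upwards [eventually_gnpProb_exists_sparse_pair_le (by linarith) hα₂ hf₁ hf₂] with n h
  convert h using 2
  ext G
  simp only [Set.mem_compl_iff, Set.mem_ofPred_eq, not_forall, not_le, exists_prop]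

/-- Let `K ≥ 2`, `1 ≤ α < K`, `p = (ln n)^K / n`, and let `f` satisfy `1 ≤ f(n)` and
`f(n) = O((ln ln n)³)`.  Then there is a constant `c > 0` such that a.a.s.
`G ~ G(n,p)` satisfies: for every two disjoint vertex subsets `U`, `W` of size
`⌊n·f(n)⁻¹·(ln n)^{−α}⌋`, we have `|E(U,W)| ≥ c·n·f(n)⁻²·(ln n)^{K−2α}`. -/
theorem gnp_edgesBetween_lower_bound (K α : ℝ) (hK : 2 ≤ K) (hα₁ : 1 ≤ α) (hα₂ : α < K)
    (f : ℕ → ℝ) (hf₁ : ∀ n, 1 ≤ f n)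
    (hf₂ : f =O[Filter.atTop] fun n => (Real.log (Real.log n)) ^ 3) :
    ∃ c : ℝ, 0 < c ∧
      GnpAAS (fun n => (Real.log n) ^ K / n)
        (fun n => {G | ∀ U W : Finset (Fin n), Disjoint U W →
          U.card = ⌊(n : ℝ) * (f n)⁻¹ * (Real.log n) ^ (-α)⌋₊ →
          W.card = ⌊(n : ℝ) * (f n)⁻¹ * (Real.log n) ^ (-α)⌋₊ →
          c * n * (f n)⁻¹ ^ 2 * (Real.log n) ^ (K - 2 * α) ≤
            ((G.edgesBetween ↑U ↑W).ncard : ℝ)}) :=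
  gnp_edgesBetween_lower_bound_general K α hα₁ hα₂ f hf₁ hf₂
end

section
/- Let m be a positive integer and let D = (V,E) be an oriented graph with the following property: for any two disjoint subsets S, T ⊆ V with |S| = |T| = m there exists an edge of D directed from a vertex of S to a vertex of T. Then D contains a directed path of length at least |V| − 2m + 1 (i.e., a directed path on at least |V| − 2m + 2 distinct vertices). -/
/-!
Run depth-first search: keep a directed path `P`, a set `D` of finished vertices and the set
`U` of unvisited ones, with no edge from `D` to `U`. If the last vertex `v` of `P` has an
out-neighbour in `U`, append it; otherwise `v` has no edge into `U` either, and moves to `D`.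
While `|U| ≥ m`, the set `D ∪ {v}` can never reach size `m`, since the hypothesis would then give
an edge from it to `U`. Hence the search reaches `|U| < m` with `|D| < m`, and then
`|P| = |V| - |D| - |U| ≥ |V| - 2m + 2`.
-/

open Finset

lemma exists_edge_of_card_le {V : Type*} {E : V → V → Prop} {m : ℕ}
    (hexp : ∀ S T : Finset V, Disjoint S T → S.card = m → T.card = m →
      ∃ s ∈ S, ∃ t ∈ T, E s t)
    {S U : Finset V} (hSU : Disjoint S U) (hS : S.card = m) (hU : m ≤ U.card) :
    ∃ s ∈ S, ∃ t ∈ U, E s t := by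
  obtain ⟨T, hTU, hT⟩ := exists_subset_card_eq hU
  obtain ⟨s, hs, t, ht, hst⟩ := hexp S T (hSU.mono_right hTU) hS hT
  exact ⟨s, hs, t, hTU ht, hst⟩

section

variable {V : Type*} [DecidableEq V] {E : V → V → Prop}

/-- The path `P` is stored last vertex first, so that extending it is `List.cons`;
its unvisited vertices are `(D ∪ P.toFinset)ᶜ`. -/
structure IsDFSState (E : V → V → Prop) (P : List V) (D : Finset V) : Prop where
  nodup : P.Nodup
  isChain : P.IsChain (flip E)
  disjoint : Disjoint D P.toFinset
  not_adj : ∀ d ∈ D, ∀ u ∉ D ∪ P.toFinset, ¬ E d u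

namespace IsDFSState

theorem nil : IsDFSState E [] ∅ :=
  ⟨List.nodup_nil, List.isChain_nil, disjoint_empty_left _, by simp⟩

theorem push {P : List V} {D : Finset V} (h : IsDFSState E P D) {u : V}
    (hu : u ∉ D ∪ P.toFinset) (hPu : ∀ v ∈ P.head?, E v u) : IsDFSState E (u :: P) D where
  nodup := List.nodup_cons.mpr ⟨fun huP => hu (mem_union_right _ (List.mem_toFinset.mpr huP)),
    h.nodup⟩
  isChain := List.isChain_cons.mpr ⟨hPu, h.isChain⟩
  disjoint := by
    rw [List.toFinset_cons, disjoint_insert_right]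
    exact ⟨fun huD => hu (mem_union_left _ huD), h.disjoint⟩
  not_adj d hd w hw := h.not_adj d hd w fun hw' => hw <| by
    rw [List.toFinset_cons, union_insert]
    exact mem_insert_of_mem hw'

theorem pop {v : V} {L : List V} {D : Finset V} (h : IsDFSState E (v :: L) D)
    (hv : ∀ u ∉ D ∪ (v :: L).toFinset, ¬ E v u) : IsDFSState E L (insert v D) where
  nodup := h.nodup.of_cons
  isChain := h.isChain.tail
  disjoint := by
    rw [disjoint_insert_left, List.mem_toFinset]
    exact ⟨(List.nodup_cons.mp h.nodup).1, h.disjoint.mono_right (by simp)⟩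
  not_adj := by
    rw [insert_union, ← union_insert, ← List.toFinset_cons]
    intro d hd
    rcases mem_insert.mp hd with rfl | hd
    exacts [hv, h.not_adj d hd]

theorem card_compl_add [Fintype V] {P : List V} {D : Finset V} (h : IsDFSState E P D) :
    (D ∪ P.toFinset)ᶜ.card + D.card + P.length = Fintype.card V := by
  have hle := card_le_univ (D ∪ P.toFinset)
  rw [card_compl, card_union_of_disjoint h.disjoint, List.toFinset_card_of_nodup h.nodup] at *
  omega

theorem exists_long_path [Fintype V] {m : ℕ}
    (hexp : ∀ S T : Finset V, Disjoint S T → S.card = m → T.card = m →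
      ∃ s ∈ S, ∃ t ∈ T, E s t)
    {P : List V} {D : Finset V} (h : IsDFSState E P D) (hD : D.card < m) :
    ∃ Q : List V, Q.Nodup ∧ Q.IsChain (flip E) ∧ Fintype.card V + 2 ≤ Q.length + 2 * m := by
  induction hsize : 2 * (D ∪ P.toFinset)ᶜ.card + P.length using Nat.strong_induction_on
    generalizing P D with
  | _ n ih =>
  have hcard := h.card_compl_add
  by_cases hU : (D ∪ P.toFinset)ᶜ.card < m
  · exact ⟨P, h.nodup, h.isChain, by omega⟩
  rw [not_lt] at hU
  by_cases hpush : ∃ u ∉ D ∪ P.toFinset, ∀ v ∈ P.head?, E v u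
  · obtain ⟨u, hu, hPu⟩ := hpush
    have hU' : (D ∪ (u :: P).toFinset)ᶜ = (D ∪ P.toFinset)ᶜ.erase u := by
      rw [List.toFinset_cons, union_insert, compl_insert]
    have := card_erase_add_one (mem_compl.mpr hu)
    refine ih _ ?_ (h.push hu hPu) hD rfl
    rw [hU', List.length_cons, ← hsize]
    omega
  obtain ⟨v, L, rfl⟩ : ∃ v L, P = v :: L := by
    cases P with
    | nil =>
      obtain ⟨u, hu⟩ := card_pos.mp ((Nat.zero_le _).trans_lt (hD.trans_le hU))
      exact absurd ⟨u, mem_compl.mp hu, by simp⟩ hpush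
    | cons v L => exact ⟨v, L, rfl⟩
  have h' := h.pop fun u hu hvu => hpush ⟨u, hu, by simpa using hvu⟩
  have hunion : insert v D ∪ L.toFinset = D ∪ (v :: L).toFinset := by
    rw [List.toFinset_cons, union_insert, insert_union]
  have hcardD : (insert v D).card = D.card + 1 :=
    card_insert_of_notMem fun hvD => disjoint_left.mp h.disjoint hvD (by simp)
  rcases (Nat.succ_le_of_lt hD).lt_or_eq with hlt | heq
  · refine ih _ ?_ h' (by omega) rfl
    rw [hunion, ← hsize, List.length_cons]
    omega
  · obtain ⟨s, hs, t, ht, hst⟩ := exists_edge_of_card_le hexp (S := insert v D)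
      (U := (insert v D ∪ L.toFinset)ᶜ) (disjoint_compl_right.mono_left subset_union_left)
      (by omega) (by rwa [hunion])
    exact (h'.not_adj s hs t (mem_compl.mp ht) hst).elim

end IsDFSState

end

theorem long_directed_path_of_pseudorandom_general {V : Type*} [Fintype V] [DecidableEq V]
    (E : V → V → Prop) (m : ℕ)
    (hexp : ∀ S T : Finset V, Disjoint S T → S.card = m → T.card = m →
      ∃ s ∈ S, ∃ t ∈ T, E s t) :
    ∃ P : List V, P.Nodup ∧ P.Chain' E ∧
      (Fintype.card V : ℤ) - 2 * m + 2 ≤ P.length := by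
  have hm : 0 < m := Nat.pos_of_ne_zero fun h0 => by
    obtain ⟨s, hs, -⟩ := hexp ∅ ∅ (disjoint_empty_left _) (card_empty.trans h0.symm)
      (card_empty.trans h0.symm)
    exact notMem_empty s hs
  obtain ⟨Q, hQ, hchain, hlen⟩ :=
    IsDFSState.nil.exists_long_path hexp (by rwa [card_empty])
  refine ⟨Q.reverse, List.nodup_reverse.mpr hQ, List.isChain_reverse.mpr hchain, ?_⟩
  rw [List.length_reverse]
  omega

/-- Let `D` be an oriented graph (no loops, no pair of opposite directed edges) on a
finite vertex set, and let `m ≥ 1`.  Suppose that for any two disjoint vertex sets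
`S`, `T` with `|S| = |T| = m` there is an edge directed from `S` to `T`.  Then `D`
contains a directed path (with pairwise distinct vertices) on at least
`|V| − 2m + 2` vertices, i.e. of length at least `|V| − 2m + 1`. -/
theorem long_directed_path_of_pseudorandom {V : Type*} [Fintype V] [DecidableEq V]
    (E : V → V → Prop) (horient : ∀ u v, E u v → ¬ E v u) (m : ℕ) (hm : 1 ≤ m)
    (hexp : ∀ S T : Finset V, Disjoint S T → S.card = m → T.card = m →
      ∃ s ∈ S, ∃ t ∈ T, E s t) :
    ∃ P : List V, P.Nodup ∧ P.Chain' E ∧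
      (Fintype.card V : ℤ) - 2 * m + 2 ≤ P.length :=
  long_directed_path_of_pseudorandom_general E m hexp
end

section
/- For all reals K > 12, a₂ ≥ a₁ > 0, c₁ > 0 and c₂ > 0 there exist a constant C > 0 and n₀ such that for all n ≥ n₀ the following holds. Set p = (ln n)^K/n and s = ⌊n/((ln n)⁵·(ln ln n)³)⌋. Let H = (V_H, E_H) be a graph with a₁·n/(ln n)⁴ ≤ |V_H| ≤ a₂·n/(ln n)⁴, let M and F be edge-disjoint spanning subgraphs of H whose edge sets partition E_H, and let A₂ = {v ∈ V_H : deg_F(v) ≥ c₁·(ln n)^{K−4}}. Assume: (a) for any two disjoint subsets U, W ⊆ V_H with |U| = |W| = s one has |E_H(U,W)| ≥ c₂·n·(ln n)^{K−10}/(ln ln n)⁶; and (b) for every subset U ⊆ V_H, |E_H(U)| ≤ max{100·|U|·ln n, 100·|U|²·p}. Then there exists a spanning subgraph H₁ = (V_H, E₁) of H such that: (i) every v ∈ A₂ has at least (c₁/2)·(ln n)³ edges of F incident to it that belong to E₁; (ii) for any two disjoint subsets U, W ⊆ V_H with |U| = |W| = s, the number of edges of E₁ between U and W is at least (c₂/2)·n/((ln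 n)³·(ln ln n)⁶); (iii) for every subset U ⊆ V_H, the number of edges of E₁ with both endpoints in U is at most max{1000·|U|·ln n, 1000·|U|²·(ln n)⁷/n}; and (iv) |E₁| ≤ C·n/ln n. -/
/-!
Keep every edge of `H` independently with probability `q = (ln n)^(7-K)`. By Chernoff's bound,
a vertex of `A₂` keeps fewer than half of its expected `≥ c₁ (ln n)³` edges of `F` with
probability at most `n⁻²`; a pair `U, W` keeps fewer than half of its expected
`≥ c₂ n / ((ln n)³ (ln ln n)⁶)` edges with probability `exp(-c₂ n / (8 (ln n)³ (ln ln n)⁶))`,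
which beats the `4^|V_H|` choices of the pair because `|V_H| = O(n / (ln n)⁴)`; and a set `U`
receives more than ten times its expected number of edges with probability at most
`n^(-500 |U|)`. By the union bound some choice of edges avoids all these events, and (iv) is
(iii) for `U = V_H`.
-/

/-- The set `E_G(U)` of edges of `G` with both endpoints in `U`. -/
def SimpleGraph.edgesWithin {V : Type*} (G : SimpleGraph V) (U : Set V) : Set (Sym2 V) :=
  {e | e ∈ G.edgeSet ∧ ∀ v ∈ e, v ∈ U}

open Finset Real Filter Topology

namespace RandomSubset

variable {α : Type*} [DecidableEq α] {q : ℝ} {E T : Finset α}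

noncomputable def weight (q : ℝ) (E S : Finset α) : ℝ := q ^ #S * (1 - q) ^ #(E \ S)

/-- The probability that a random subset of `E`, containing each element independently with
probability `q`, satisfies `P`. -/
noncomputable def prob (q : ℝ) (E : Finset α) (P : Finset α → Prop) : ℝ := by
  classical exact ∑ S ∈ E.powerset with P S, weight q E S

lemma weight_nonneg (hq0 : 0 ≤ q) (hq1 : q ≤ 1) (S : Finset α) : 0 ≤ weight q E S :=
  mul_nonneg (pow_nonneg hq0 _) (pow_nonneg (sub_nonneg.2 hq1) _)

lemma sum_weight_mul_pow_card_inter (hT : T ⊆ E) (z : ℝ) :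
    ∑ S ∈ E.powerset, weight q E S * z ^ #(S ∩ T) = (1 - q + q * z) ^ #T := by
  have h := prod_add (fun e => q * if e ∈ T then z else 1) (fun _ => 1 - q) E
  have hlhs : ∏ e ∈ E, ((q * if e ∈ T then z else 1) + (1 - q))
      = ∏ e ∈ E, if e ∈ T then 1 - q + q * z else 1 := by
    refine prod_congr rfl fun e _ => ?_
    split_ifs <;> ring
  rw [hlhs, prod_ite_mem, inter_eq_right.2 hT, prod_const] at h
  rw [h]
  refine sum_congr rfl fun S _ => ?_
  rw [prod_mul_distrib, prod_ite_mem, prod_const, prod_const, prod_const, weight]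
  ring

lemma sum_weight (q : ℝ) (E : Finset α) : ∑ S ∈ E.powerset, weight q E S = 1 := by
  simpa using sum_weight_mul_pow_card_inter (q := q) (empty_subset E) 1

lemma exists_not_of_prob_lt_one {P : Finset α → Prop} (h : prob q E P < 1) :
    ∃ S ⊆ E, ¬ P S := by
  classical
  by_contra! hP
  rw [prob, filter_true_of_mem fun S hS => hP S (mem_powerset.1 hS), sum_weight] at h
  exact lt_irrefl _ h

lemma prob_or_le (hq0 : 0 ≤ q) (hq1 : q ≤ 1) (P Q : Finset α → Prop) :
    prob q E (fun S => P S ∨ Q S) ≤ prob q E P + prob q E Q := by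
  classical
  simp only [prob, filter_or]
  rw [← sum_union_inter]
  exact le_add_of_nonneg_right (sum_nonneg fun S _ => weight_nonneg hq0 hq1 S)

lemma prob_exists_le (hq0 : 0 ≤ q) (hq1 : q ≤ 1) {ι : Type*} (D : Finset ι)
    (P : ι → Finset α → Prop) :
    prob q E (fun S => ∃ i ∈ D, P i S) ≤ ∑ i ∈ D, prob q E (P i) := by
  induction D using Finset.cons_induction with
  | empty => simp [prob]
  | cons j D hj ih =>
    simp only [mem_cons, exists_eq_or_imp, sum_cons]
    exact (prob_or_le hq0 hq1 _ _).trans (add_le_add_right ih _)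

lemma prob_le_exp (hq0 : 0 ≤ q) (hq1 : q ≤ 1) (hT : T ⊆ E) {P : Finset α → Prop} (l c : ℝ)
    (hP : ∀ S ⊆ E, P S → c ≤ l * #(S ∩ T)) :
    prob q E P ≤ exp (q * #T * (exp l - 1) - c) := by
  classical
  have hw := weight_nonneg (E := E) hq0 hq1
  calc prob q E P
      ≤ ∑ S ∈ E.powerset with P S, weight q E S * exp (l * #(S ∩ T) - c) := by
        refine sum_le_sum fun S hS => le_mul_of_one_le_right (hw S) (one_le_exp ?_)
        obtain ⟨hSE, hPS⟩ := mem_filter.1 hS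
        linarith [hP S (mem_powerset.1 hSE) hPS]
    _ ≤ ∑ S ∈ E.powerset, weight q E S * exp (l * #(S ∩ T) - c) :=
        sum_le_sum_of_subset_of_nonneg (filter_subset _ _)
          fun S _ _ => mul_nonneg (hw S) (exp_pos _).le
    _ = exp (-c) * (1 - q + q * exp l) ^ #T := by
        rw [← sum_weight_mul_pow_card_inter hT, mul_sum]
        refine sum_congr rfl fun S _ => ?_
        rw [← exp_nat_mul, ← mul_comm l, sub_eq_neg_add, exp_add]
        ring
    _ ≤ exp (-c) * exp (q * (exp l - 1)) ^ #T := by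
        gcongr
        linarith [add_one_le_exp (q * (exp l - 1))]
    _ = exp (q * #T * (exp l - 1) - c) := by
        rw [← exp_nat_mul, ← exp_add]
        ring_nf

lemma prob_le_exp_neg_div_four (hq0 : 0 ≤ q) (hq1 : q ≤ 1) (hT : T ⊆ E)
    {P : Finset α → Prop} {a : ℝ} (ha : 0 ≤ a) (haT : 2 * a ≤ q * #T)
    (hP : ∀ S ⊆ E, P S → #(S ∩ T) ≤ a) :
    prob q E P ≤ exp (-(a / 4)) := by
  refine (prob_le_exp hq0 hq1 hT (-log 2) (-(a * log 2)) fun S hS hPS => ?_).trans ?_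
  · nlinarith [hP S hS hPS, log_pos one_lt_two]
  · rw [exp_neg, exp_log two_pos, exp_le_exp]
    nlinarith [log_two_lt_d9]

lemma prob_le_exp_neg_div_two (hq0 : 0 ≤ q) (hq1 : q ≤ 1) (hT : T ⊆ E)
    {P : Finset α → Prop} {t : ℝ} (htT : 10 * (q * #T) ≤ t) (hP : ∀ S ⊆ E, P S → t ≤ #(S ∩ T)) :
    prob q E P ≤ exp (-(t / 2)) := by
  refine (prob_le_exp hq0 hq1 hT 2 (2 * t) fun S hS hPS => ?_).trans ?_
  · linarith [hP S hS hPS]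
  · have he : exp 2 ≤ 16 := by
      rw [show (2 : ℝ) = 1 + 1 by norm_num, exp_add]
      nlinarith [exp_one_lt_d9, exp_pos 1]
    have hqT : 0 ≤ q * #T := by positivity
    rw [exp_le_exp]
    nlinarith

end RandomSubset

lemma Set.ncard_coe_finset_inter {α : Type*} [DecidableEq α] (S : Finset α) (X : Set α)
    [Fintype X] : ((S : Set α) ∩ X).ncard = #(S ∩ X.toFinset) := by
  rw [← Set.ncard_coe_finset]
  congr 1
  ext
  simp

namespace SimpleGraph

variable {V : Type*} {G H : SimpleGraph V}

lemma edgeSet_fromEdgeSet_of_subset {s : Set (Sym2 V)} (hs : s ⊆ H.edgeSet) :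
    (fromEdgeSet s).edgeSet = s := by
  rw [edgeSet_fromEdgeSet, sdiff_eq_left]
  exact Set.disjoint_left.2 fun e he => H.not_isDiag_of_mem_edgeSet (hs he)

@[simp]
lemma edgesWithin_empty (G : SimpleGraph V) : G.edgesWithin ∅ = ∅ :=
  Set.eq_empty_of_forall_notMem fun e he => by
    induction e using Sym2.ind
    exact he.2 _ (Sym2.mem_mk_left _ _)

@[simp]
lemma edgesWithin_univ (G : SimpleGraph V) :
    G.edgesWithin Set.univ = G.edgeSet := by
  simp [edgesWithin]

lemma edgesWithin_eq_inter_of_le (h : G ≤ H) (U : Set V) :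
    G.edgesWithin U = G.edgeSet ∩ H.edgesWithin U := by
  ext e
  simp only [edgesWithin, Set.mem_inter_iff, Set.mem_ofPred_eq]
  exact ⟨fun he => ⟨he.1, edgeSet_mono h he.1, he.2⟩, fun he => ⟨he.1, he.2.2⟩⟩

lemma edgesBetween_eq_inter_of_le (h : G ≤ H) (U W : Set V) :
    G.edgesBetween U W = G.edgeSet ∩ H.edgesBetween U W := by
  ext e
  simp only [edgesBetween, Set.mem_inter_iff, Set.mem_ofPred_eq]
  exact ⟨fun he => ⟨he.1, edgeSet_mono h he.1, he.2⟩, fun he => ⟨he.1, he.2.2⟩⟩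

lemma ncard_setOf_adj_and_adj (F G : SimpleGraph V) (v : V) :
    {u | F.Adj v u ∧ G.Adj v u}.ncard = (G.edgeSet ∩ F.incidenceSet v).ncard := by
  have himage : (fun u => s(v, u)) '' {u | F.Adj v u ∧ G.Adj v u}
      = G.edgeSet ∩ F.incidenceSet v := by
    ext e
    constructor
    · rintro ⟨u, ⟨hF, hG⟩, rfl⟩
      exact ⟨hG, hF, Sym2.mem_mk_left v u⟩
    · rintro ⟨hG, hF, hv⟩
      obtain ⟨u, rfl⟩ := Sym2.mem_iff_exists.1 hv
      exact ⟨u, ⟨hF, hG⟩, rfl⟩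
  rw [← himage, Set.ncard_image_of_injective _ fun u w h => Sym2.congr_right.1 h]

lemma ncard_incidenceSet (G : SimpleGraph V) (v : V) :
    (G.incidenceSet v).ncard = (G.neighborSet v).ncard := by
  classical exact Set.ncard_congr' (G.incidenceSetEquivNeighborSet v)

variable [Fintype V] [DecidableRel H.Adj] {S : Finset (Sym2 V)}

lemma coe_subset_edgeSet_of_subset_edgeFinset (hS : S ⊆ H.edgeFinset) :
    (S : Set (Sym2 V)) ⊆ H.edgeSet := by
  simpa using coe_subset.2 hS

lemma fromEdgeSet_le_of_subset_edgeFinset (hS : S ⊆ H.edgeFinset) :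
    fromEdgeSet (S : Set (Sym2 V)) ≤ H :=
  (fromEdgeSet_le H).2 (Set.sdiff_subset.trans (coe_subset_edgeSet_of_subset_edgeFinset hS))

variable [DecidableEq V]

lemma ncard_edgesWithin_fromEdgeSet (hS : S ⊆ H.edgeFinset) (U : Set V)
    [Fintype (H.edgesWithin U)] :
    ((fromEdgeSet (S : Set (Sym2 V))).edgesWithin U).ncard
      = #(S ∩ (H.edgesWithin U).toFinset) := by
  rw [edgesWithin_eq_inter_of_le (fromEdgeSet_le_of_subset_edgeFinset hS),
    edgeSet_fromEdgeSet_of_subset (coe_subset_edgeSet_of_subset_edgeFinset hS),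
    Set.ncard_coe_finset_inter]

lemma ncard_edgesBetween_fromEdgeSet (hS : S ⊆ H.edgeFinset) (U W : Set V)
    [Fintype (H.edgesBetween U W)] :
    ((fromEdgeSet (S : Set (Sym2 V))).edgesBetween U W).ncard
      = #(S ∩ (H.edgesBetween U W).toFinset) := by
  rw [edgesBetween_eq_inter_of_le (fromEdgeSet_le_of_subset_edgeFinset hS),
    edgeSet_fromEdgeSet_of_subset (coe_subset_edgeSet_of_subset_edgeFinset hS),
    Set.ncard_coe_finset_inter]

lemma ncard_setOf_adj_and_fromEdgeSet_adj (hS : S ⊆ H.edgeFinset) (F : SimpleGraph V)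
    [DecidableRel F.Adj] (v : V) :
    {u | F.Adj v u ∧ (fromEdgeSet (S : Set (Sym2 V))).Adj v u}.ncard
      = #(S ∩ F.incidenceFinset v) := by
  rw [ncard_setOf_adj_and_adj, edgeSet_fromEdgeSet_of_subset
    (coe_subset_edgeSet_of_subset_edgeFinset hS), Set.ncard_coe_finset_inter, incidenceFinset]

end SimpleGraph

section RandomSpanningSubgraph

open RandomSubset SimpleGraph

variable {V : Type*} [Fintype V] [DecidableEq V] {H : SimpleGraph V} [DecidableRel H.Adj]
  {q : ℝ}

lemma prob_exists_few_incident_le (hq0 : 0 ≤ q) (hq1 : q ≤ 1) {F : SimpleGraph V}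
    [DecidableRel F.Adj] (hFH : F ≤ H) {a : ℝ} (ha : 0 ≤ a) (D : Finset V)
    (hD : ∀ v ∈ D, 2 * a ≤ q * (F.neighborSet v).ncard) :
    prob q H.edgeFinset (fun S => ∃ v ∈ D,
      ({u | F.Adj v u ∧ (fromEdgeSet (S : Set (Sym2 V))).Adj v u}.ncard : ℝ) < a)
      ≤ #D * exp (-(a / 4)) := by
  refine (prob_exists_le hq0 hq1 _ _).trans ?_
  rw [← nsmul_eq_mul]
  refine sum_le_card_nsmul _ _ _ fun v hv =>
    prob_le_exp_neg_div_four hq0 hq1 (T := F.incidenceFinset v) ?_ ha ?_ fun S hS hlt => ?_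
  · intro e he
    rw [mem_incidenceFinset] at he
    exact mem_edgeFinset.2 (edgeSet_mono hFH he.1)
  · rw [incidenceFinset, ← Set.ncard_eq_toFinset_card', ncard_incidenceSet]
    exact hD v hv
  · rw [ncard_setOf_adj_and_fromEdgeSet_adj hS] at hlt
    exact hlt.le

lemma prob_exists_few_edgesBetween_le (hq0 : 0 ≤ q) (hq1 : q ≤ 1) {a : ℝ} (ha : 0 ≤ a)
    (pairs : Finset (Set V × Set V))
    (hpairs : ∀ p ∈ pairs, 2 * a ≤ q * (H.edgesBetween p.1 p.2).ncard) :
    prob q H.edgeFinset (fun S => ∃ p ∈ pairs,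
      (((fromEdgeSet (S : Set (Sym2 V))).edgesBetween p.1 p.2).ncard : ℝ) < a)
      ≤ #pairs * exp (-(a / 4)) := by
  classical
  refine (prob_exists_le hq0 hq1 _ _).trans ?_
  rw [← nsmul_eq_mul]
  refine sum_le_card_nsmul _ _ _ fun p hp => prob_le_exp_neg_div_four hq0 hq1
    (T := (H.edgesBetween p.1 p.2).toFinset) ?_ ha ?_ fun S hS hlt => ?_
  · intro e he
    exact mem_edgeFinset.2 (Set.mem_toFinset.1 he).1
  · rw [← Set.ncard_eq_toFinset_card']
    exact hpairs p hp
  · rw [ncard_edgesBetween_fromEdgeSet hS] at hlt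
    exact hlt.le

lemma prob_exists_many_edgesWithin_le (hq0 : 0 ≤ q) (hq1 : q ≤ 1) (𝒰 : Finset (Set V))
    (t : Set V → ℝ) (ht : ∀ U ∈ 𝒰, 10 * (q * (H.edgesWithin U).ncard) ≤ t U) :
    prob q H.edgeFinset (fun S => ∃ U ∈ 𝒰,
      t U < ((fromEdgeSet (S : Set (Sym2 V))).edgesWithin U).ncard)
      ≤ ∑ U ∈ 𝒰, exp (-(t U / 2)) := by
  classical
  refine (prob_exists_le hq0 hq1 _ _).trans (sum_le_sum fun U hU => prob_le_exp_neg_div_two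
    hq0 hq1 (T := (H.edgesWithin U).toFinset) ?_ ?_ fun S hS hlt => ?_)
  · intro e he
    exact mem_edgeFinset.2 (Set.mem_toFinset.1 he).1
  · rw [← Set.ncard_eq_toFinset_card']
    exact ht U hU
  · rw [ncard_edgesWithin_fromEdgeSet hS] at hlt
    exact hlt.le

theorem exists_subset_edgeFinset_of_failure_lt_one (hq0 : 0 ≤ q) (hq1 : q ≤ 1)
    {F : SimpleGraph V} [DecidableRel F.Adj] (hFH : F ≤ H) {a b : ℝ} (ha : 0 ≤ a) (hb : 0 ≤ b)
    (D : Finset V) (hD : ∀ v ∈ D, 2 * a ≤ q * (F.neighborSet v).ncard)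
    (pairs : Finset (Set V × Set V))
    (hpairs : ∀ p ∈ pairs, 2 * b ≤ q * (H.edgesBetween p.1 p.2).ncard)
    (𝒰 : Finset (Set V)) (t : Set V → ℝ)
    (h𝒰 : ∀ U ∈ 𝒰, 10 * (q * (H.edgesWithin U).ncard) ≤ t U)
    (hlt : #D * exp (-(a / 4)) + #pairs * exp (-(b / 4)) + ∑ U ∈ 𝒰, exp (-(t U / 2)) < 1) :
    ∃ S ⊆ H.edgeFinset,
      (∀ v ∈ D, a ≤ {u | F.Adj v u ∧ (fromEdgeSet (S : Set (Sym2 V))).Adj v u}.ncard) ∧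
      (∀ p ∈ pairs, b ≤ ((fromEdgeSet (S : Set (Sym2 V))).edgesBetween p.1 p.2).ncard) ∧
      (∀ U ∈ 𝒰, ((fromEdgeSet (S : Set (Sym2 V))).edgesWithin U).ncard ≤ t U) := by
  have hfail := (prob_or_le hq0 hq1 _ _).trans <| add_le_add
    ((prob_or_le hq0 hq1 _ _).trans <| add_le_add
      (prob_exists_few_incident_le hq0 hq1 hFH ha D hD)
      (prob_exists_few_edgesBetween_le hq0 hq1 hb pairs hpairs))
    (prob_exists_many_edgesWithin_le hq0 hq1 𝒰 t h𝒰)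
  obtain ⟨S, hS, hgood⟩ := exists_not_of_prob_lt_one (hfail.trans_lt hlt)
  simp only [not_or, not_exists, not_and, not_lt] at hgood
  exact ⟨S, hS, hgood.1.1, hgood.1.2, hgood.2⟩

end RandomSpanningSubgraph

lemma sum_pow_ncard_le {V : Type*} [Fintype V] (𝒰 : Finset (Set V)) (h𝒰 : ∅ ∉ 𝒰) {x : ℝ}
    (hx : 0 ≤ x) (hxV : Fintype.card V * x ≤ 1) :
    ∑ U ∈ 𝒰, x ^ U.ncard ≤ 2 * (Fintype.card V * x) := by
  classical
  have htotal : ∑ U : Set V, x ^ U.ncard = (x + 1) ^ Fintype.card V := by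
    rw [← Fintype.sum_pow_mul_eq_add_pow V x 1]
    simp only [one_pow, mul_one]
    exact (Fintype.sum_equiv Fintype.finsetEquivSet _ _ fun U => by simp).symm
  calc ∑ U ∈ 𝒰, x ^ U.ncard
      ≤ ∑ U ∈ (univ : Finset (Set V)).erase ∅, x ^ U.ncard :=
        sum_le_sum_of_subset_of_nonneg
          (fun U hU => mem_erase.2 ⟨ne_of_mem_of_not_mem hU h𝒰, mem_univ U⟩)
          fun U _ _ => pow_nonneg hx _
    _ = (x + 1) ^ Fintype.card V - 1 := by
        rw [← htotal, ← add_sum_erase univ _ (mem_univ ∅)]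
        simp
    _ ≤ exp (Fintype.card V * x) - 1 := by
        rw [exp_nat_mul]
        gcongr
        exact add_one_le_exp x
    _ ≤ 2 * (Fintype.card V * x) := by
        have hNx : 0 ≤ Fintype.card V * x := by positivity
        have h := abs_exp_sub_one_le (x := Fintype.card V * x) (by rwa [abs_of_nonneg hNx])
        rw [abs_of_nonneg hNx] at h
        exact (le_abs_self _).trans h

lemma natCast_mul_exp_neg_two_mul_log_le {N n : ℕ} (hN : (N : ℝ) ≤ n) (hn : 16 ≤ n) :
    N * exp (-(2 * log n)) ≤ 1 / 16 := by
  have hn0 : (0 : ℝ) < n := by positivity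
  rw [exp_neg, ← log_rpow hn0, exp_log (by positivity), ← div_eq_mul_inv,
    div_le_div_iff₀ (by positivity) (by norm_num)]
  have hn16 : (16 : ℝ) ≤ n := by exact_mod_cast hn
  norm_num
  nlinarith

lemma four_pow_mul_exp_neg_le {N : ℕ} {b : ℝ} (h : N * log 4 + log 4 ≤ b) :
    (4 : ℝ) ^ N * exp (-b) ≤ 1 / 4 := by
  rw [← exp_log (by norm_num : (0 : ℝ) < 4), ← exp_nat_mul, ← exp_add, exp_log (by norm_num),
    show (1 : ℝ) / 4 = exp (-log 4) by rw [exp_neg, exp_log (by norm_num)]; norm_num, exp_le_exp]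
  linarith

lemma max_le_of_le_div_pow_four {N n A L : ℝ} (hN : 0 ≤ N) (hn : 0 < n) (hL : 1 ≤ L)
    (hNA : N ≤ A * n / L ^ 4) :
    max (1000 * N * L) (1000 * N ^ 2 * L ^ 7 / n) ≤ 1000 * (A + A ^ 2) * n / L := by
  have hL0 : 0 < L := by linarith
  rw [le_div_iff₀ (by positivity)] at hNA
  have hA : 0 ≤ A := by nlinarith [pow_pos hL0 4]
  rw [max_le_iff, le_div_iff₀ hL0, div_le_div_iff₀ hn hL0]
  constructor
  · nlinarith [mul_le_mul_of_nonneg_left (pow_le_pow_right₀ hL (by norm_num : 2 ≤ 4)) hN]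
  · nlinarith [mul_le_mul hNA hNA (by positivity) (by positivity), mul_nonneg hA (sq_nonneg n)]

lemma failure_bound_lt_one {V : Type*} [Fintype V] {n : ℕ} {c b : ℝ} (D : Finset V)
    (pairs : Finset (Set V × Set V)) (𝒰 : Finset (Set V)) (h𝒰 : ∅ ∉ 𝒰) (t : Set V → ℝ)
    (ht : ∀ U, 1000 * U.ncard * log n ≤ t U) (hn : 16 ≤ n) (hVn : (Fintype.card V : ℝ) ≤ n)
    (hc : 16 ≤ c * log n ^ 2) (hb : Fintype.card V * log 4 + log 4 ≤ b / 4) :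
    #D * exp (-(c / 2 * log n ^ 3 / 4)) + #pairs * exp (-(b / 4))
      + ∑ U ∈ 𝒰, exp (-(t U / 2)) < 1 := by
  have hL : 0 < log n := log_pos (by exact_mod_cast (by omega : 1 < n))
  have hsmall := natCast_mul_exp_neg_two_mul_log_le hVn hn
  have hD : (#D : ℝ) * exp (-(c / 2 * log n ^ 3 / 4)) ≤ 1 / 16 := by
    refine le_trans ?_ hsmall
    gcongr
    · exact_mod_cast card_le_univ D
    · nlinarith [mul_le_mul_of_nonneg_left hc hL.le]
  have hpairs : (#pairs : ℝ) * exp (-(b / 4)) ≤ 1 / 4 := by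
    refine le_trans ?_ (four_pow_mul_exp_neg_le hb)
    gcongr
    calc (#pairs : ℝ) ≤ Fintype.card (Set V × Set V) := by exact_mod_cast card_le_univ pairs
      _ = 4 ^ Fintype.card V := by
        rw [Fintype.card_prod, Fintype.card_set, ← mul_pow]
        norm_num
  have h𝒰 : ∑ U ∈ 𝒰, exp (-(t U / 2)) ≤ 1 / 8 := by
    have hx : Fintype.card V * exp (-(500 * log n)) ≤ 1 / 16 :=
      (mul_le_mul_of_nonneg_left (exp_le_exp.2 (by linarith)) (Nat.cast_nonneg _)).trans hsmall
    calc _ ≤ ∑ U ∈ 𝒰, exp (-(500 * log n)) ^ U.ncard := sum_le_sum fun U _ => by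
            rw [← exp_nat_mul, exp_le_exp]
            linarith [ht U]
      _ ≤ 2 * (Fintype.card V * exp (-(500 * log n))) :=
          sum_pow_ncard_le 𝒰 h𝒰 (exp_pos _).le (by linarith)
      _ ≤ 1 / 8 := by linarith
  linarith

open SimpleGraph in
theorem exists_subset_edgeFinset_of_log_bounds {V : Type*} [Fintype V] [DecidableEq V]
    {H F : SimpleGraph V} [DecidableRel H.Adj] (hFH : F ≤ H) {n : ℕ} {K A c₁ c₂ : ℝ}
    (hn : 16 ≤ n) (hL : 1 < log n) (hK : 7 < K) (hc₂ : 0 ≤ c₂) (hAL : A ≤ log n ^ 4)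
    (hc₁L : 16 ≤ c₁ * log n ^ 2)
    (hc₂L : log 4 * A * n / log n ^ 4 + log 4 ≤ c₂ / 8 * n / (log n ^ 3 * log (log n) ^ 6))
    (hVA : (Fintype.card V : ℝ) ≤ A * n / log n ^ 4)
    (hExp : ∀ U W : Set V, Disjoint U W →
      U.ncard = ⌊(n : ℝ) / ((log n) ^ 5 * (log (log n)) ^ 3)⌋₊ →
      W.ncard = ⌊(n : ℝ) / ((log n) ^ 5 * (log (log n)) ^ 3)⌋₊ →
      c₂ * n * (log n) ^ (K - 10) / (log (log n)) ^ 6 ≤ ((H.edgesBetween U W).ncard : ℝ))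
    (hUpper : ∀ U : Set V, ((H.edgesWithin U).ncard : ℝ) ≤
      max (100 * U.ncard * log n) (100 * (U.ncard : ℝ) ^ 2 * ((log n) ^ K / n))) :
    ∃ S ⊆ H.edgeFinset,
      (∀ v : V, c₁ * (log n) ^ (K - 4) ≤ ((F.neighborSet v).ncard : ℝ) →
        c₁ / 2 * (log n) ^ 3 ≤
          ({u : V | F.Adj v u ∧ (fromEdgeSet (S : Set (Sym2 V))).Adj v u}.ncard : ℝ)) ∧
      (∀ U W : Set V, Disjoint U W →
        U.ncard = ⌊(n : ℝ) / ((log n) ^ 5 * (log (log n)) ^ 3)⌋₊ →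
        W.ncard = ⌊(n : ℝ) / ((log n) ^ 5 * (log (log n)) ^ 3)⌋₊ →
        c₂ / 2 * n / ((log n) ^ 3 * (log (log n)) ^ 6) ≤
          (((fromEdgeSet (S : Set (Sym2 V))).edgesBetween U W).ncard : ℝ)) ∧
      (∀ U : Set V, (((fromEdgeSet (S : Set (Sym2 V))).edgesWithin U).ncard : ℝ) ≤
        max (1000 * U.ncard * log n) (1000 * (U.ncard : ℝ) ^ 2 * (log n) ^ 7 / n)) := by
  classical
  set L := log n
  set s := ⌊(n : ℝ) / (L ^ 5 * log L ^ 3)⌋₊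
  have hL0 : 0 < L := by linarith
  set q := L ^ (7 - K)
  have hq0 : 0 ≤ q := by positivity
  have hq1 : q ≤ 1 := rpow_le_one_of_one_le_of_nonpos hL.le (by linarith)
  -- `q` turns the degree and edge-count bounds for `H` into the expected ones for `H₁`
  have hq : ∀ r : ℝ, q * L ^ (K + r) = L ^ (7 + r) := fun r => by
    rw [← rpow_add hL0]; ring_nf
  have hq₁ : q * L ^ (K - 4) = L ^ 3 := by rw [sub_eq_add_neg, hq]; norm_num
  have hq₂ : q * L ^ (K - 10) = (L ^ 3)⁻¹ := by
    rw [sub_eq_add_neg, hq, show (7 : ℝ) + -10 = -(3 : ℕ) by norm_num, rpow_neg hL0.le,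
      rpow_natCast]
  have hq₃ : q * L ^ K = L ^ 7 := by simpa using hq 0
  set D : Finset V := {v | c₁ * L ^ (K - 4) ≤ (F.neighborSet v).ncard}
  set pairs : Finset (Set V × Set V) := {p | Disjoint p.1 p.2 ∧ p.1.ncard = s ∧ p.2.ncard = s}
  set t : Set V → ℝ := fun U => max (1000 * U.ncard * L) (1000 * (U.ncard : ℝ) ^ 2 * L ^ 7 / n)
  have hD : ∀ v ∈ D, 2 * (c₁ / 2 * L ^ 3) ≤ q * (F.neighborSet v).ncard := fun v hv => by
    rw [← hq₁]
    nlinarith [mul_le_mul_of_nonneg_left (mem_filter.1 hv).2 hq0]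
  have hpairs : ∀ p ∈ pairs,
      2 * (c₂ / 2 * n / (L ^ 3 * log L ^ 6)) ≤ q * (H.edgesBetween p.1 p.2).ncard := fun p hp => by
    obtain ⟨hdisj, h1, h2⟩ := (mem_filter.1 hp).2
    calc 2 * (c₂ / 2 * n / (L ^ 3 * log L ^ 6))
        = q * (c₂ * n * L ^ (K - 10) / log L ^ 6) := by
          rw [show q * (c₂ * n * L ^ (K - 10) / log L ^ 6)
            = c₂ * n * (q * L ^ (K - 10)) / log L ^ 6 by ring, hq₂]
          ring
      _ ≤ q * (H.edgesBetween p.1 p.2).ncard := by gcongr; exact hExp _ _ hdisj h1 h2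
  have h𝒰 : ∀ U : Set V, 10 * (q * (H.edgesWithin U).ncard) ≤ t U := fun U => by
    calc 10 * (q * (H.edgesWithin U).ncard)
        ≤ 10 * (q * max (100 * U.ncard * L) (100 * (U.ncard : ℝ) ^ 2 * (L ^ K / n))) := by
          gcongr; exact hUpper U
      _ = max (q * (1000 * U.ncard * L)) (1000 * (U.ncard : ℝ) ^ 2 * (q * L ^ K) / n) := by
          rw [mul_max_of_nonneg _ _ hq0, mul_max_of_nonneg _ _ (by norm_num)]
          congr 1 <;> ring
      _ ≤ t U := by
          rw [hq₃]
          exact max_le_max_right _ (mul_le_of_le_one_left (by positivity) hq1)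
  have hVn : (Fintype.card V : ℝ) ≤ n := hVA.trans <| by
    rw [div_le_iff₀ (by positivity), mul_comm]
    exact mul_le_mul_of_nonneg_left hAL (Nat.cast_nonneg n)
  have hfail := failure_bound_lt_one D pairs {U | U.Nonempty} (by simp) t
    (fun U => le_max_left _ _) hn hVn hc₁L (b := c₂ / 2 * n / (L ^ 3 * log L ^ 6)) <| by
      have := mul_le_mul_of_nonneg_left hVA (log_nonneg (by norm_num : (1 : ℝ) ≤ 4))
      linear_combination this + hc₂L
  obtain ⟨S, hS, h₁, h₂, h₃⟩ := exists_subset_edgeFinset_of_failure_lt_one hq0 hq1 hFH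
    (by nlinarith) (by positivity) D hD pairs hpairs _ t (fun U _ => h𝒰 U) hfail
  refine ⟨S, hS, fun v hv => h₁ v (by simpa [D] using hv),
    fun U W hUW hU hW => h₂ (U, W) (by simp [pairs, hUW, hU, hW]), fun U => ?_⟩
  rcases U.eq_empty_or_nonempty with rfl | hU
  · simp
  · exact h₃ U (by simpa using hU)

lemma eventually_mul_div_log_pow_add_le (b b' : ℝ) {c : ℝ} (hc : 0 < c) :
    ∀ᶠ t : ℝ in atTop, b * t / log t ^ 4 + b' ≤ c * t / (log t ^ 3 * log (log t) ^ 6) := by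
  have hlog : ∀ k : ℕ, Tendsto (fun t => log t ^ k / t) atTop (𝓝 0) := fun k => by
    simpa using tendsto_pow_log_div_mul_add_atTop 1 0 k one_ne_zero
  have h₁ := (hlog 6).comp tendsto_log_atTop
  have h₂ := h₁.mul (hlog 4)
  rw [mul_zero] at h₂
  filter_upwards [(h₁.const_mul b).eventually (gt_mem_nhds (by linarith : b * 0 < c / 2)),
    (h₂.const_mul b').eventually (gt_mem_nhds (by linarith : b' * 0 < c / 2)),
    tendsto_log_atTop.eventually_gt_atTop 1, eventually_gt_atTop 0] with t hb hb' hL ht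
  simp only [Function.comp_apply] at hb hb'
  have hLL : 0 < log (log t) := log_pos hL
  have hX : 0 < t / (log t ^ 3 * log (log t) ^ 6) := by positivity
  have e : b * t / log t ^ 4 + b' = t / (log t ^ 3 * log (log t) ^ 6) *
      (b * (log (log t) ^ 6 / log t) + b' * (log (log t) ^ 6 / log t * (log t ^ 4 / t))) := by
    field_simp
  rw [e, mul_div_assoc, mul_comm c]
  exact mul_le_mul_of_nonneg_left (by linarith) hX.le

lemma eventually_log_bounds (A c₁ c₂ : ℝ) (hc₁ : 0 < c₁) (hc₂ : 0 < c₂) :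
    ∀ᶠ n : ℕ in atTop, 16 ≤ n ∧ 1 < log n ∧ A ≤ log n ^ 4 ∧ 16 ≤ c₁ * log n ^ 2 ∧
      log 4 * A * n / log n ^ 4 + log 4 ≤ c₂ / 8 * n / (log n ^ 3 * log (log n) ^ 6) := by
  have hL (k : ℕ) (hk : k ≠ 0) (B : ℝ) : ∀ᶠ t : ℝ in atTop, B ≤ log t ^ k :=
    ((tendsto_pow_atTop hk).comp tendsto_log_atTop).eventually_ge_atTop B
  have hreal := (tendsto_log_atTop.eventually_gt_atTop 1).and <|
    (hL 4 (by norm_num) A).and <| (hL 2 (by norm_num) (16 / c₁)).and <|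
    eventually_mul_div_log_pow_add_le (log 4 * A) (log 4) (by positivity : 0 < c₂ / 8)
  filter_upwards [eventually_ge_atTop 16, tendsto_natCast_atTop_atTop.eventually hreal]
    with n hn ⟨hL1, hA, hc₁L, hc₂L⟩
  refine ⟨hn, hL1, hA, ?_, hc₂L⟩
  rwa [div_le_iff₀ hc₁, mul_comm] at hc₁L

theorem exists_sparse_subgraph_general (K a₁ a₂ c₁ c₂ : ℝ)
    (hK : 12 < K) (hc₁ : 0 < c₁) (hc₂ : 0 < c₂) :
    ∃ C : ℝ, 0 < C ∧ ∃ n₀ : ℕ, ∀ n : ℕ, n₀ ≤ n →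
      ∀ (V : Type) [Fintype V] (H M F : SimpleGraph V),
        -- `H` has between `a₁·n/(ln n)⁴` and `a₂·n/(ln n)⁴` vertices
        a₁ * n / (Real.log n) ^ 4 ≤ (Fintype.card V : ℝ) →
        (Fintype.card V : ℝ) ≤ a₂ * n / (Real.log n) ^ 4 →
        -- `M` and `F` are edge-disjoint spanning subgraphs partitioning `E_H`
        (∀ u v, ¬ (M.Adj u v ∧ F.Adj u v)) →
        (∀ u v, H.Adj u v ↔ (M.Adj u v ∨ F.Adj u v)) →
        -- (a) expansion between disjoint sets of size `s = ⌊n/((ln n)⁵(ln ln n)³)⌋`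
        (∀ U W : Set V, Disjoint U W →
          U.ncard = ⌊(n : ℝ) / ((Real.log n) ^ 5 * (Real.log (Real.log n)) ^ 3)⌋₊ →
          W.ncard = ⌊(n : ℝ) / ((Real.log n) ^ 5 * (Real.log (Real.log n)) ^ 3)⌋₊ →
          c₂ * n * (Real.log n) ^ (K - 10) / (Real.log (Real.log n)) ^ 6 ≤
            ((H.edgesBetween U W).ncard : ℝ)) →
        -- (b) upper bound on the number of edges inside any set, with `p = (ln n)^K/n`
        (∀ U : Set V, ((H.edgesWithin U).ncard : ℝ) ≤
          max (100 * U.ncard * Real.log n)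
              (100 * (U.ncard : ℝ) ^ 2 * ((Real.log n) ^ K / n))) →
        -- conclusion: a sparse spanning subgraph `H₁ ≤ H` with properties (i)–(iv)
        ∃ H₁ : SimpleGraph V, H₁ ≤ H ∧
          -- (i) every `v ∈ A₂` keeps many `F`-edges in `H₁`
          (∀ v : V, c₁ * (Real.log n) ^ (K - 4) ≤ ((F.neighborSet v).ncard : ℝ) →
            c₁ / 2 * (Real.log n) ^ 3 ≤
              (({u : V | F.Adj v u ∧ H₁.Adj v u}).ncard : ℝ)) ∧
          -- (ii) expansion in `H₁` between disjoint sets of size `s`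
          (∀ U W : Set V, Disjoint U W →
            U.ncard = ⌊(n : ℝ) / ((Real.log n) ^ 5 * (Real.log (Real.log n)) ^ 3)⌋₊ →
            W.ncard = ⌊(n : ℝ) / ((Real.log n) ^ 5 * (Real.log (Real.log n)) ^ 3)⌋₊ →
            c₂ / 2 * n / ((Real.log n) ^ 3 * (Real.log (Real.log n)) ^ 6) ≤
              ((H₁.edgesBetween U W).ncard : ℝ)) ∧
          -- (iii) upper bound on the number of `H₁`-edges inside any set
          (∀ U : Set V, ((H₁.edgesWithin U).ncard : ℝ) ≤
            max (1000 * U.ncard * Real.log n)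
                (1000 * (U.ncard : ℝ) ^ 2 * (Real.log n) ^ 7 / n)) ∧
          -- (iv) `H₁` has at most `C·n/ln n` edges
          ((H₁.edgeSet.ncard : ℝ) ≤ C * n / Real.log n) := by
  classical
  set A := max a₂ 1
  refine ⟨1000 * (A + A ^ 2), by positivity, ?_⟩
  obtain ⟨n₀, hn₀⟩ := eventually_atTop.1 (eventually_log_bounds A c₁ c₂ hc₁ hc₂)
  refine ⟨n₀, fun n hn V _ H _ F _ hV _ hHMF hExp hUpper => ?_⟩
  obtain ⟨h16, hL, hAL, hc₁L, hc₂L⟩ := hn₀ n hn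
  have hVA : (Fintype.card V : ℝ) ≤ A * n / Real.log n ^ 4 :=
    hV.trans (by gcongr; exact le_max_left _ _)
  have hFH : F ≤ H := fun u v h => (hHMF u v).2 (Or.inr h)
  obtain ⟨S, hS, hi, hii, hiii⟩ := exists_subset_edgeFinset_of_log_bounds hFH h16 hL
    (by linarith) hc₂.le hAL hc₁L hc₂L hVA hExp hUpper
  refine ⟨SimpleGraph.fromEdgeSet S, SimpleGraph.fromEdgeSet_le_of_subset_edgeFinset hS,
    hi, hii, hiii, ?_⟩
  have hE := hiii Set.univ
  rw [SimpleGraph.edgesWithin_univ, Set.ncard_univ, Nat.card_eq_fintype_card] at hE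
  exact hE.trans (max_le_of_le_div_pow_four (by positivity) (by positivity) hL.le hVA)

/-- Existence of a sparse subgraph `H₁` of `H` retaining degree and expansion
properties: Lemma 2.13 of the paper. -/
theorem exists_sparse_subgraph (K a₁ a₂ c₁ c₂ : ℝ)
    (hK : 12 < K) (ha₁ : 0 < a₁) (ha : a₁ ≤ a₂) (hc₁ : 0 < c₁) (hc₂ : 0 < c₂) :
    ∃ C : ℝ, 0 < C ∧ ∃ n₀ : ℕ, ∀ n : ℕ, n₀ ≤ n →
      ∀ (V : Type) [Fintype V] (H M F : SimpleGraph V),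
        -- `H` has between `a₁·n/(ln n)⁴` and `a₂·n/(ln n)⁴` vertices
        a₁ * n / (Real.log n) ^ 4 ≤ (Fintype.card V : ℝ) →
        (Fintype.card V : ℝ) ≤ a₂ * n / (Real.log n) ^ 4 →
        -- `M` and `F` are edge-disjoint spanning subgraphs partitioning `E_H`
        (∀ u v, ¬ (M.Adj u v ∧ F.Adj u v)) →
        (∀ u v, H.Adj u v ↔ (M.Adj u v ∨ F.Adj u v)) →
        -- (a) expansion between disjoint sets of size `s = ⌊n/((ln n)⁵(ln ln n)³)⌋`
        (∀ U W : Set V, Disjoint U W →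
          U.ncard = ⌊(n : ℝ) / ((Real.log n) ^ 5 * (Real.log (Real.log n)) ^ 3)⌋₊ →
          W.ncard = ⌊(n : ℝ) / ((Real.log n) ^ 5 * (Real.log (Real.log n)) ^ 3)⌋₊ →
          c₂ * n * (Real.log n) ^ (K - 10) / (Real.log (Real.log n)) ^ 6 ≤
            ((H.edgesBetween U W).ncard : ℝ)) →
        -- (b) upper bound on the number of edges inside any set, with `p = (ln n)^K/n`
        (∀ U : Set V, ((H.edgesWithin U).ncard : ℝ) ≤
          max (100 * U.ncard * Real.log n)
              (100 * (U.ncard : ℝ) ^ 2 * ((Real.log n) ^ K / n))) →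
        -- conclusion: a sparse spanning subgraph `H₁ ≤ H` with properties (i)–(iv)
        ∃ H₁ : SimpleGraph V, H₁ ≤ H ∧
          -- (i) every `v ∈ A₂` keeps many `F`-edges in `H₁`
          (∀ v : V, c₁ * (Real.log n) ^ (K - 4) ≤ ((F.neighborSet v).ncard : ℝ) →
            c₁ / 2 * (Real.log n) ^ 3 ≤
              (({u : V | F.Adj v u ∧ H₁.Adj v u}).ncard : ℝ)) ∧
          -- (ii) expansion in `H₁` between disjoint sets of size `s`
          (∀ U W : Set V, Disjoint U W →
            U.ncard = ⌊(n : ℝ) / ((Real.log n) ^ 5 * (Real.log (Real.log n)) ^ 3)⌋₊ →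
            W.ncard = ⌊(n : ℝ) / ((Real.log n) ^ 5 * (Real.log (Real.log n)) ^ 3)⌋₊ →
            c₂ / 2 * n / ((Real.log n) ^ 3 * (Real.log (Real.log n)) ^ 6) ≤
              ((H₁.edgesBetween U W).ncard : ℝ)) ∧
          -- (iii) upper bound on the number of `H₁`-edges inside any set
          (∀ U : Set V, ((H₁.edgesWithin U).ncard : ℝ) ≤
            max (1000 * U.ncard * Real.log n)
                (1000 * (U.ncard : ℝ) ^ 2 * (Real.log n) ^ 7 / n)) ∧
          -- (iv) `H₁` has at most `C·n/ln n` edges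
          ((H₁.edgeSet.ncard : ℝ) ≤ C * n / Real.log n) :=
  exists_sparse_subgraph_general K a₁ a₂ c₁ c₂ hK hc₁ hc₂
end

section
/- For every real K > 5 and every constant c > 0 there exists n₀ such that for every n ≥ n₀ the following holds: if G is a graph on n vertices with minimum degree at least c·(ln n)^K, then there exists a vertex subset U₀ ⊆ V(G) with |U₀| = ⌈n/(ln n)⁴⌉ such that every vertex v ∈ V(G) has at least (c/2)·(ln n)^{K−4} neighbors in U₀. -/
/-!
Colour the vertices uniformly at random with `b = ⌈(ln n)⁴⌉` colours. A vertex of degree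
`d ≥ c (ln n)^K` expects `d / b ≈ c (ln n)^(K-4)` neighbours of each colour, and the
exponential moment bound `𝔼[(1/2)^X] ≤ exp (-d / (2b))` (a Chernoff bound with parameter `1/2`)
shows that it has fewer than half of that with probability `o(1 / (n b))`, because `K > 5`
makes `(ln n)^(K-4)` dominate `ln (n b) ≤ 2 ln n`. A union bound over all vertices and colours
yields a colouring in which every colour class is good for every vertex; by pigeonhole some
class has at most `n / b ≤ n / (ln n)⁴` elements, and any superset of it of the right size
works. Probabilities are written as counts of colourings `f : α → β`.
-/

open Finset Real Filter

section Chernoff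

variable {α β : Type*} [Fintype α] [DecidableEq α] [Fintype β] [DecidableEq β]

lemma sum_pow_card_filter_apply_eq_le (A : Finset α) (i : β) {x : ℝ} (hx : 0 ≤ x) :
    ∑ f : α → β, x ^ #{u ∈ A | f u = i} ≤
      Fintype.card β ^ Fintype.card α * exp (-((1 - x) * #A / Fintype.card β)) := by
  have : Nonempty β := ⟨i⟩
  have hβ : (0 : ℝ) < Fintype.card β := by exact_mod_cast Fintype.card_pos
  set w : α → β → ℝ := fun u y => if u ∈ A ∧ y = i then x else 1
  have weight (f : α → β) : x ^ #{u ∈ A | f u = i} = ∏ u, w u (f u) := by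
    rw [prod_ite, prod_const, prod_const_one, mul_one]
    congr 2
    ext u
    simp
  have factor (u : α) : ∑ y, w u y ≤
      Fintype.card β * exp (-((1 - x) / Fintype.card β) * if u ∈ A then 1 else 0) := by
    by_cases hu : u ∈ A
    · have hsum : ∑ y, w u y = Fintype.card β * (-((1 - x) / Fintype.card β) + 1) := by
        simp only [w, hu, true_and, sum_ite, filter_eq', filter_ne', mem_univ, if_true,
          sum_const, card_singleton, card_erase_of_mem, card_univ, nsmul_eq_mul]
        rw [Nat.cast_sub Fintype.card_pos]
        field_simp
        ring
      simpa [hu, hsum] using mul_le_mul_of_nonneg_left (add_one_le_exp _) hβ.le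
    · simp [w, hu]
  calc ∑ f : α → β, x ^ #{u ∈ A | f u = i}
      = ∏ u, ∑ y, w u y := by simp only [weight, Fintype.prod_sum]
    _ ≤ ∏ u, Fintype.card β * exp (-((1 - x) / Fintype.card β) * if u ∈ A then 1 else 0) :=
        prod_le_prod (fun u _ => sum_nonneg fun y _ => by positivity) fun u _ => factor u
    _ = Fintype.card β ^ Fintype.card α * exp (-((1 - x) * #A / Fintype.card β)) := by
        rw [prod_mul_distrib, prod_const, ← exp_sum, ← mul_sum, sum_boole, card_univ]
        simp only [filter_mem_eq_inter, univ_inter]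
        ring_nf

lemma card_filter_card_filter_apply_eq_lt_mul_rpow_le (A : Finset α) (i : β) {x : ℝ} (t : ℝ)
    (hx₀ : 0 < x) (hx₁ : x ≤ 1) :
    #{f : α → β | (#{u ∈ A | f u = i} : ℝ) < t} * x ^ t ≤
      Fintype.card β ^ Fintype.card α * exp (-((1 - x) * #A / Fintype.card β)) := by
  calc (#{f : α → β | (#{u ∈ A | f u = i} : ℝ) < t} : ℝ) * x ^ t
      = ∑ f ∈ {f : α → β | (#{u ∈ A | f u = i} : ℝ) < t}, x ^ t := by
        rw [sum_const, nsmul_eq_mul]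
    _ ≤ ∑ f ∈ {f : α → β | (#{u ∈ A | f u = i} : ℝ) < t}, x ^ #{u ∈ A | f u = i} :=
        sum_le_sum fun f hf => by
          rw [← rpow_natCast]
          exact rpow_le_rpow_of_exponent_ge hx₀ hx₁ (mem_filter.1 hf).2.le
    _ ≤ ∑ f : α → β, x ^ #{u ∈ A | f u = i} :=
        sum_le_sum_of_subset_of_nonneg (filter_subset _ _) fun f _ _ => by positivity
    _ ≤ _ := sum_pow_card_filter_apply_eq_le A i hx₀.le

end Chernoff

lemma exists_forall_not_of_sum_card_filter_lt {ι γ : Type*} [Fintype ι] [Fintype γ]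
    (P : ι → γ → Prop) [∀ p, DecidablePred (P p)]
    (h : ∑ p, (#{f | P p f} : ℝ) < Fintype.card γ) :
    ∃ f, ∀ p, ¬ P p f := by
  classical
  by_contra! hall
  have hcover : (univ : Finset γ) ⊆ univ.biUnion fun p => {f | P p f} := fun f _ => by
    obtain ⟨p, hp⟩ := hall f
    simpa using ⟨p, hp⟩
  have := (card_le_card hcover).trans card_biUnion_le
  rw [card_univ] at this
  exact h.not_ge (by exact_mod_cast this)

theorem SimpleGraph.exists_card_mul_le_and_le_ncard_neighborSet_inter {V : Type*} [Fintype V]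
    (G : SimpleGraph V) {b : ℕ} (hb : 0 < b) {δ t : ℝ}
    (hδ : ∀ v, δ ≤ (G.neighborSet v).ncard)
    (h : Fintype.card V * b * exp (-(δ / (2 * b))) < (1 / 2) ^ t) :
    ∃ U : Finset V, #U * b ≤ Fintype.card V ∧ ∀ v, t ≤ (G.neighborSet v ∩ U).ncard := by
  classical
  have : NeZero b := ⟨hb.ne'⟩
  have hbR : (0 : ℝ) < b := by exact_mod_cast hb
  set bad : V × Fin b → (V → Fin b) → Prop := fun q f =>
    (#{u ∈ G.neighborFinset q.1 | f u = q.2} : ℝ) < t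
  set p := b ^ Fintype.card V * exp (-(δ / (2 * b))) / (1 / 2) ^ t
  have hbad (q : V × Fin b) : #{f | bad q f} ≤ p := by
    rw [le_div_iff₀ (by positivity)]
    refine (card_filter_card_filter_apply_eq_lt_mul_rpow_le _ q.2 t (by norm_num)
      (by norm_num)).trans ?_
    have hδv : δ ≤ #(G.neighborFinset q.1) := by
      simpa [Set.ncard_eq_toFinset_card', neighborFinset_def] using hδ q.1
    have hexp : δ / (2 * b) ≤ (1 - 1 / 2) * #(G.neighborFinset q.1) / b := by
      rw [div_le_div_iff₀ (by positivity) hbR]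
      nlinarith
    rw [Fintype.card_fin]
    exact mul_le_mul_of_nonneg_left (exp_le_exp.2 (neg_le_neg hexp)) (by positivity)
  have hunion : ∑ q, (#{f | bad q f} : ℝ) < Fintype.card (V → Fin b) :=
    calc ∑ q, (#{f | bad q f} : ℝ)
        ≤ ∑ _q : V × Fin b, p := sum_le_sum fun q _ => hbad q
      _ = b ^ Fintype.card V * (Fintype.card V * b * exp (-(δ / (2 * b))) / (1 / 2) ^ t) := by
        simp only [p, sum_const, card_univ, Fintype.card_prod, Fintype.card_fin, nsmul_eq_mul]
        push_cast
        ring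
      _ < b ^ Fintype.card V :=
        mul_lt_of_lt_one_right (by positivity) ((div_lt_one (by positivity)).2 h)
      _ = Fintype.card (V → Fin b) := by simp
  obtain ⟨f, hf⟩ := exists_forall_not_of_sum_card_filter_lt bad hunion
  obtain ⟨i, hi⟩ := Fintype.exists_card_fiber_le_of_card_le_nsmul (f := f)
    (b := (Fintype.card V / b : ℝ)) (by simp [field])
  refine ⟨({u | f u = i} : Finset V), by exact_mod_cast (le_div_iff₀ hbR).1 hi, fun v => ?_⟩
  rw [Set.ncard_eq_toFinset_card', Set.toFinset_inter, Finset.toFinset_coe, ← neighborFinset_def,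
    ← filter_mem_eq_inter]
  simpa [bad] using hf (v, i)

/- With `P = L^(K-4)`: the exponent `c L^K / (2B)` is at least `3/8 c P`, the threshold costs
`c P ln 2 / 2 < 0.35 c P`, and the remaining `c P / 40` absorbs `2L`. -/
lemma exp_two_mul_mul_exp_neg_lt {K c L B : ℝ} (hc : 0 < c) (hL : 0 < L) (hB₀ : 0 < B)
    (hB : B ≤ 4 / 3 * L ^ 4) (hgrowth : 80 / c ≤ L ^ (K - 5)) :
    exp (2 * L) * exp (-(c * L ^ K / (2 * B))) < (1 / 2) ^ (c / 2 * L ^ (K - 4)) := by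
  set P := L ^ (K - 4)
  have hLK : L ^ K = P * L ^ 4 := by
    rw [← rpow_natCast, ← rpow_add hL]
    norm_num
  have hP : P = L ^ (K - 5) * L := by
    rw [← rpow_add_one hL.ne', show K - 5 + 1 = K - 4 by ring]
  have hcP : 0 < c * P := mul_pos hc (rpow_pos_of_pos hL _)
  have hmain : 3 / 8 * (c * P) ≤ c * L ^ K / (2 * B) := by
    rw [hLK, le_div_iff₀ (by positivity)]
    nlinarith
  have hlinear : 2 * L ≤ c * P / 40 := by
    rw [div_le_iff₀ hc] at hgrowth
    nlinarith
  rw [rpow_def_of_pos (by norm_num : (0 : ℝ) < 1 / 2), ← exp_add, exp_lt_exp, one_div, log_inv]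
  nlinarith [log_two_lt_d9]

lemma natCast_mul_ceil_mul_exp_neg_lt {K c : ℝ} {n : ℕ} (hc : 0 < c) (hL : 2 ≤ log n)
    (hgrowth : 80 / c ≤ log n ^ (K - 5)) (hsmall : log n ^ 4 + 1 ≤ n) :
    n * ⌈log n ^ 4⌉₊ * exp (-(c * log n ^ K / (2 * ⌈log n ^ 4⌉₊))) <
      (1 / 2) ^ (c / 2 * log n ^ (K - 4)) := by
  set L := log n
  have hL4 : 16 ≤ L ^ 4 := by nlinarith [pow_le_pow_left₀ (by norm_num) hL 4]
  have hb_ge : L ^ 4 ≤ ⌈L ^ 4⌉₊ := Nat.le_ceil _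
  have hb_lt : (⌈L ^ 4⌉₊ : ℝ) < L ^ 4 + 1 := Nat.ceil_lt_add_one (by positivity)
  have hnb : (n : ℝ) * ⌈L ^ 4⌉₊ ≤ exp (2 * L) := by
    rw [show 2 * L = L + L by ring, exp_add, exp_log (by linarith)]
    exact mul_le_mul_of_nonneg_left (by linarith) (by positivity)
  calc (n : ℝ) * ⌈L ^ 4⌉₊ * exp (-(c * L ^ K / (2 * ⌈L ^ 4⌉₊)))
      ≤ exp (2 * L) * exp (-(c * L ^ K / (2 * ⌈L ^ 4⌉₊))) := by gcongr
    _ < _ := exp_two_mul_mul_exp_neg_lt hc (by linarith) (by linarith) (by linarith) hgrowth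

lemma eventually_log_bounds_s11 {p : ℝ} (hp : 0 < p) (C : ℝ) :
    ∀ᶠ n : ℕ in atTop, 2 ≤ log n ∧ C ≤ log n ^ p ∧ log n ^ 4 + 1 ≤ n := by
  have hlog : Tendsto (fun n : ℕ => log n) atTop atTop :=
    tendsto_log_atTop.comp tendsto_natCast_atTop_atTop
  have hpow : ∀ᶠ n : ℕ in atTop, log n ^ 4 ≤ 1 / 2 * n := by
    simpa [Even.pow_abs ⟨2, rfl⟩] using tendsto_natCast_atTop_atTop.eventually
      ((isLittleO_pow_log_id_atTop (n := 4)).bound (by norm_num : (0 : ℝ) < 1 / 2))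
  filter_upwards [hlog.eventually_ge_atTop 2,
    ((tendsto_rpow_atTop hp).comp hlog).eventually_ge_atTop C,
    hpow, eventually_ge_atTop 2] with n h2 hgrowth hsmall hn
  refine ⟨h2, hgrowth, ?_⟩
  have : (2 : ℝ) ≤ n := by exact_mod_cast hn
  linarith

/-- For every real `K > 5` and constant `c > 0`, for all sufficiently large `n`:
if `G` is a graph on `n` vertices with minimum degree at least `c·(ln n)^K`, then
there is a vertex subset `U₀` of size `⌈n/(ln n)⁴⌉` such that every vertex has at
least `(c/2)·(ln n)^{K−4}` neighbors in `U₀`. -/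
theorem exists_dominating_core (K c : ℝ) (hK : 5 < K) (hc : 0 < c) :
    ∃ n₀ : ℕ, ∀ n : ℕ, n₀ ≤ n → ∀ G : SimpleGraph (Fin n),
      (∀ v : Fin n, c * (Real.log n) ^ K ≤ ((G.neighborSet v).ncard : ℝ)) →
      ∃ U₀ : Finset (Fin n), U₀.card = ⌈(n : ℝ) / (Real.log n) ^ 4⌉₊ ∧
        ∀ v : Fin n,
          c / 2 * (Real.log n) ^ (K - 4) ≤ ((G.neighborSet v ∩ ↑U₀).ncard : ℝ) := by
  obtain ⟨n₀, hn₀⟩ :=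
    eventually_atTop.1 (eventually_log_bounds_s11 (by linarith : 0 < K - 5) (80 / c))
  refine ⟨n₀, fun n hn G hdeg => ?_⟩
  obtain ⟨hL, hgrowth, hsmall⟩ := hn₀ n hn
  have hL4 : 1 ≤ log n ^ 4 := one_le_pow₀ (by linarith)
  obtain ⟨U, hUb, hU⟩ := G.exists_card_mul_le_and_le_ncard_neighborSet_inter
    (Nat.ceil_pos.2 (by positivity : (0 : ℝ) < log n ^ 4)) hdeg
    (by simpa using natCast_mul_ceil_mul_exp_neg_lt hc hL hgrowth hsmall)
  have hUm : #U ≤ ⌈(n : ℝ) / log n ^ 4⌉₊ := by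
    have hUb' : (#U : ℝ) * ⌈log n ^ 4⌉₊ ≤ n := by
      simpa using (Nat.cast_le (α := ℝ)).2 hUb
    refine Nat.cast_le.1 (le_trans ?_ (Nat.le_ceil _))
    rw [le_div_iff₀ (by positivity)]
    nlinarith [Nat.le_ceil (log n ^ 4)]
  have hmn : ⌈(n : ℝ) / log n ^ 4⌉₊ ≤ n := Nat.ceil_le.2 (div_le_self (by positivity) hL4)
  obtain ⟨U₀, hUU₀, -, hU₀⟩ :=
    exists_subsuperset_card_eq (subset_univ U) hUm (by simpa using hmn)
  refine ⟨U₀, hU₀, fun v => (hU v).trans ?_⟩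
  exact_mod_cast Set.ncard_le_ncard (Set.inter_subset_inter_right _ (coe_subset.2 hUU₀))
end

section
/- Let G be a graph, let r ≥ 1 and t ≥ 0 be integers, and let P₀, P₁, …, P_t be pairwise vertex-disjoint paths in G, each with more than 2r vertices and each given a fixed orientation. Suppose that for every 0 ≤ i < t there is an edge of G joining one of the last r vertices of P_i to one of the first r vertices of P_{i+1}. Then G contains a path with at least (Σ_{i=0}^{t} |V(P_i)|) − 2r(t+1) vertices. -/
/-!
Splice the paths greedily: follow `P 0` up to the tail `x` of the first linking edge, cross to
its head `y` in `P 1`, follow `P 1` up to the tail of the next linking edge, and so on. Each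
splice drops fewer than `r` vertices after `x` and fewer than `r` before `y`. Since `P i` has
more than `2r` vertices, the part of it kept from `y` on still contains its last `r` vertices,
so the next linking edge starts on the path built so far.
-/

namespace List

variable {α : Type*}

theorem exists_eq_append_cons_of_mem_take {l : List α} {r : ℕ} {y : α} (hy : y ∈ l.take r) :
    ∃ l₁ l₂, l = l₁ ++ y :: l₂ ∧ l₁.length < r := by
  obtain ⟨l₁, l₂, h⟩ := append_of_mem hy
  refine ⟨l₁, l₂ ++ l.drop r, by simpa [h] using (take_append_drop r l).symm, ?_⟩
  have := congrArg length h
  simp only [length_take, length_append, length_cons] at this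
  omega

theorem exists_eq_append_cons_of_mem_reverse_take {l : List α} {r : ℕ} {x : α}
    (hx : x ∈ l.reverse.take r) : ∃ l₁ l₂, l = l₁ ++ x :: l₂ ∧ l₂.length < r := by
  obtain ⟨l₁, l₂, h, hlen⟩ := exists_eq_append_cons_of_mem_take hx
  exact ⟨l₂.reverse, l₁.reverse, by simpa using congrArg reverse h, by simpa using hlen⟩

theorem IsSuffix.reverse_take_subset {s l : List α} (h : s <:+ l) (r : ℕ) :
    s.reverse.take r ⊆ l.reverse.take r :=
  ((reverse_prefix.2 h).take r).subset

theorem reverse_take_drop {l : List α} {k r : ℕ} (h : k + r ≤ l.length) :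
    (l.drop k).reverse.take r = l.reverse.take r := by
  rw [reverse_drop, take_take, Nat.min_eq_left (by omega)]

theorem drop_suffix_drop {l : List α} {i j : ℕ} (h : i ≤ j) : l.drop j <:+ l.drop i := by
  simpa [drop_drop, Nat.add_sub_cancel' h] using drop_suffix (j - i) (l.drop i)

end List

namespace SimpleGraph

variable {V : Type*} {G : SimpleGraph V}

theorem exists_path_append_of_adj {Q R : List V} {r : ℕ}
    (hQ : Q.Nodup ∧ Q.IsChain G.Adj) (hR : R.Nodup ∧ R.IsChain G.Adj) (hQR : Q.Disjoint R)
    {x y : V} (hx : x ∈ Q.reverse.take r) (hy : y ∈ R.take r) (hxy : G.Adj x y) :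
    ∃ S : List V, S.Nodup ∧ S.IsChain G.Adj ∧ S ⊆ Q ++ R ∧ R.drop r <:+ S ∧
      Q.length + R.length + 2 ≤ S.length + 2 * r := by
  obtain ⟨Q₁, Q₂, rfl, hQ₂⟩ := List.exists_eq_append_cons_of_mem_reverse_take hx
  obtain ⟨R₁, R₂, rfl, hR₁⟩ := List.exists_eq_append_cons_of_mem_take hy
  have hpre : Q₁ ++ [x] <+: Q₁ ++ x :: Q₂ := ⟨Q₂, by simp⟩
  have hsuf : y :: R₂ <:+ R₁ ++ y :: R₂ := List.suffix_append _ _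
  refine ⟨(Q₁ ++ [x]) ++ y :: R₂, ?_, ?_, (hpre.sublist.append hsuf.sublist).subset, ?_, ?_⟩
  · exact (hpre.sublist.nodup hQ.1).append (hsuf.sublist.nodup hR.1)
      (List.disjoint_of_subset_right hsuf.subset (List.disjoint_of_subset_left hpre.subset hQR))
  · exact (hQ.2.infix hpre.isInfix).append (hR.2.infix hsuf.isInfix) (by simpa using hxy)
  · have hdrop : (R₁ ++ y :: R₂).drop R₁.length = y :: R₂ := List.drop_left
    exact (hdrop ▸ List.drop_suffix_drop hR₁.le).trans (List.suffix_append _ _)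
  · simp only [List.length_append, List.length_cons]
    omega

theorem exists_path_of_linked_paths (r : ℕ) : ∀ (t : ℕ) (P : Fin (t + 1) → List V),
    (∀ i, (P i).Nodup ∧ (P i).IsChain G.Adj) → (∀ i, 2 * r < (P i).length) →
    (∀ i j, i ≠ j → ∀ v, v ∈ P i → v ∉ P j) →
    (∀ i : Fin t, ∃ x ∈ (P i.castSucc).reverse.take r,
      ∃ y ∈ (P i.succ).take r, G.Adj x y) →
    ∃ Q : List V, Q.Nodup ∧ Q.IsChain G.Adj ∧ (∀ v ∈ Q, ∃ i, v ∈ P i) ∧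
      (P (Fin.last t)).drop r <:+ Q ∧ ∑ i, (P i).length ≤ Q.length + 2 * r * t
  | 0, P, hpath, _, _, _ =>
    ⟨P 0, (hpath 0).1, (hpath 0).2, fun _ hv => ⟨0, hv⟩, List.drop_suffix _ _, by simp⟩
  | t + 1, P, hpath, hlong, hdisj, hlink => by
    obtain ⟨Q, hQnd, hQch, hQmem, hQsuf, hQlen⟩ :=
      exists_path_of_linked_paths r t (fun i => P i.castSucc) (fun _ => hpath _)
        (fun _ => hlong _) (fun _ _ hij => hdisj _ _ (Fin.castSucc_injective _ |>.ne hij))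
        (fun i => by simpa only [Fin.succ_castSucc] using hlink i.castSucc)
    obtain ⟨x, hx, y, hy, hxy⟩ := hlink (Fin.last t)
    rw [Fin.succ_last] at hy
    have hxQ : x ∈ Q.reverse.take r := by
      have := hlong (Fin.last t).castSucc
      exact hQsuf.reverse_take_subset r (by rwa [List.reverse_take_drop (by omega)])
    have hQdisj : Q.Disjoint (P (Fin.last (t + 1))) := fun v hvQ hvP => by
      obtain ⟨i, hi⟩ := hQmem v hvQ
      exact hdisj _ _ (Fin.castSucc_ne_last i) v hi hvP
    obtain ⟨S, hSnd, hSch, hSsub, hSsuf, hSlen⟩ :=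
      exists_path_append_of_adj ⟨hQnd, hQch⟩ (hpath _) hQdisj hxQ hy hxy
    refine ⟨S, hSnd, hSch, fun v hv => ?_, hSsuf, ?_⟩
    · rcases List.mem_append.1 (hSsub hv) with h | h
      · obtain ⟨i, hi⟩ := hQmem v h
        exact ⟨_, hi⟩
      · exact ⟨_, h⟩
    · rw [Fin.sum_univ_castSucc]
      linarith

end SimpleGraph

theorem long_path_of_linked_paths_general {V : Type*} (G : SimpleGraph V)
    (r t : ℕ) (P : Fin (t + 1) → List V)
    (hpath : ∀ i, (P i).Nodup ∧ (P i).Chain' G.Adj)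
    (hlong : ∀ i, 2 * r < (P i).length)
    (hdisj : ∀ i j, i ≠ j → ∀ v, v ∈ P i → v ∉ P j)
    (hlink : ∀ i : Fin t, ∃ x ∈ (P i.castSucc).reverse.take r,
      ∃ y ∈ (P i.succ).take r, G.Adj x y) :
    ∃ Q : List V, Q.Nodup ∧ Q.Chain' G.Adj ∧
      (∑ i, ((P i).length : ℤ)) - 2 * r * (t + 1) ≤ Q.length := by
  obtain ⟨Q, hnd, hch, -, -, hlen⟩ :=
    SimpleGraph.exists_path_of_linked_paths r t P hpath hlong hdisj hlink
  refine ⟨Q, hnd, hch, ?_⟩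
  have hlenℤ : ∑ i, ((P i).length : ℤ) ≤ Q.length + 2 * r * t := by exact_mod_cast hlen
  linarith

/-- Let `r ≥ 1`, `t ≥ 0`, and let `P 0, …, P t` be pairwise vertex-disjoint (oriented)
paths in a graph `G`, each on more than `2r` vertices.  If for every `i < t` there is
an edge of `G` from one of the last `r` vertices of `P i` to one of the first `r`
vertices of `P (i+1)`, then `G` contains a path on at least
`(Σ_i |V(P i)|) − 2r(t+1)` vertices. -/
theorem long_path_of_linked_paths {V : Type*} (G : SimpleGraph V)
    (r t : ℕ) (hr : 1 ≤ r) (P : Fin (t + 1) → List V)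
    (hpath : ∀ i, (P i).Nodup ∧ (P i).Chain' G.Adj)
    (hlong : ∀ i, 2 * r < (P i).length)
    (hdisj : ∀ i j, i ≠ j → ∀ v, v ∈ P i → v ∉ P j)
    (hlink : ∀ i : Fin t, ∃ x ∈ (P i.castSucc).reverse.take r,
      ∃ y ∈ (P i.succ).take r, G.Adj x y) :
    ∃ Q : List V, Q.Nodup ∧ Q.Chain' G.Adj ∧
      (∑ i, ((P i).length : ℤ)) - 2 * r * (t + 1) ≤ Q.length :=
  long_path_of_linked_paths_general G r t P hpath hlong hdisj hlink
end
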